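/- arXiv:2002.03926 — 7 statements merged into one kernel-verified Lean document; each statement's English description precedes it below -/
import Mathlib

section
/- Let φ be a continuous function on [0,∞] which is convex on (0,∞), and define φ*(λ) := inf_{x ∈ [0,∞]} (xλ + φ(x) − φ(0)) for λ ∈ [0,∞]. Then for any real p > 1, ∫_0^∞ (−φ'(x))^p dx = −(p−1)p ∫_0^∞ λ^{p−2} φ*(λ) dλ. In particular ∫_0^∞ φ'(x)^2 dx = −2 ∫_0^∞ φ*(λ) dλ. -/
open Set Filter MeasureTheory

/-- The transform of Legendre type: `φ*(λ) = inf_{x ∈ [0,∞]} (xλ + φ(x) − φ(0))`.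
(For `λ ≥ 0` the contribution of the point `x = ∞` never goes below the infimum over
`[0,∞)`, since `φ` is decreasing towards its limit at `∞`; so the infimum over `[0,∞]`
coincides with the infimum over `[0,∞)`.) -/
noncomputable def legendreStar (φ : ℝ → ℝ) (lam : ℝ) : ℝ :=
  sInf ((fun x => x * lam + φ x - φ 0) '' Set.Ici 0)

/-!
Write `ψ = -φ'`; convexity and the finite limit at `∞` make `ψ` nonnegative and nonincreasing on
`(0,∞)`, and `φ(0) - φ(x) = ∫_0^x ψ`. For `λ > 0` the function `x ↦ xλ + φ(x) - φ(0)` is therefore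
minimised where `ψ` crosses the level `λ`, which gives `-φ*(λ) = ∫_0^∞ (ψ(t) - λ)⁺ dt`.
Integrating against `λ^(p-2)` and exchanging the integrals (Tonelli), the claim follows from
`∫_0^a λ^(p-2) (a - λ) dλ = a^p / ((p-1)p)` for `a = ψ(t)`.
-/

open scoped ENNReal Topology

lemma tendsto_slope_atTop_zero {f : ℝ → ℝ} {l : ℝ} (hf : Tendsto f atTop (𝓝 l)) (x : ℝ) :
    Tendsto (slope f x) atTop (𝓝 0) := by
  have hinv : Tendsto (fun y => (y - x)⁻¹) atTop (𝓝 0) :=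
    (tendsto_atTop_add_const_right _ (-x) tendsto_id).inv_tendsto_atTop
  have := hinv.mul (hf.sub_const (f x))
  rw [zero_mul] at this
  exact this.congr fun y => (slope_def_module f x y).symm

namespace ConvexOn

variable {S : Set ℝ} {f : ℝ → ℝ} {x l : ℝ}

lemma rightDeriv_nonpos_of_tendsto_atTop (hfc : ConvexOn ℝ S f) (hx : x ∈ interior S)
    (hS : Ioi x ⊆ S) (hf : Tendsto f atTop (𝓝 l)) : derivWithin f (Ioi x) x ≤ 0 :=
  ge_of_tendsto (tendsto_slope_atTop_zero hf x) <| (eventually_gt_atTop x).mono fun _ hy =>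
    hfc.rightDeriv_le_slope_of_mem_interior hx (hS hy) hy

lemma tendsto_rightDeriv_atTop_zero (hfc : ConvexOn ℝ S f) (hS : Ioi x ⊆ interior S)
    (hf : Tendsto f atTop (𝓝 l)) :
    Tendsto (fun y => derivWithin f (Ioi y) y) atTop (𝓝 0) := by
  have hx' : x + 1 ∈ interior S := hS (lt_add_one x)
  refine tendsto_of_tendsto_of_tendsto_of_le_of_le' (tendsto_slope_atTop_zero hf (x + 1))
    tendsto_const_nhds ?_ ?_
  · filter_upwards [eventually_gt_atTop (x + 1)] with y hy
    have hyS : y ∈ interior S := hS ((lt_add_one x).trans hy)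
    exact (hfc.slope_le_leftDeriv_of_mem_interior (interior_subset hx') hyS hy).trans
      (hfc.leftDeriv_le_rightDeriv_of_mem_interior hyS)
  · filter_upwards [eventually_gt_atTop x] with y hy
    exact hfc.rightDeriv_nonpos_of_tendsto_atTop (hS hy)
      (fun z hz => interior_subset (hS (hy.trans hz))) hf

variable {a b : ℝ}

lemma integrableOn_rightDeriv_of_nonpos (hfc : ConvexOn ℝ (Ioo a b) f)
    (hc : ContinuousOn f (Icc a b)) (hneg : ∀ x ∈ Ioo a b, derivWithin f (Ioi x) x ≤ 0) :
    IntegrableOn (fun x => derivWithin f (Ioi x) x) (Ioc a b) := by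
  have hderiv : ∀ x ∈ Ioo a b, HasDerivWithinAt f (derivWithin f (Ioi x) x) (Ioi x) x :=
    fun x hx => hfc.hasDerivWithinAt_rightDeriv_of_mem_interior (by rwa [interior_Ioo])
  simpa using (intervalIntegral.integrableOn_deriv_right_of_nonneg hc.neg
    (fun x hx => (hderiv x hx).neg) fun x hx => neg_nonneg.2 (hneg x hx)).neg

lemma integral_rightDeriv_eq_sub_of_nonpos (hab : a ≤ b) (hfc : ConvexOn ℝ (Ioo a b) f)
    (hc : ContinuousOn f (Icc a b)) (hneg : ∀ x ∈ Ioo a b, derivWithin f (Ioi x) x ≤ 0) :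
    ∫ x in a..b, derivWithin f (Ioi x) x = f b - f a :=
  intervalIntegral.integral_eq_sub_of_hasDeriv_right_of_le hab hc
    (fun x hx => hfc.hasDerivWithinAt_rightDeriv_of_mem_interior (by rwa [interior_Ioo]))
    ((intervalIntegrable_iff_integrableOn_Ioc_of_le hab).2
      (hfc.integrableOn_rightDeriv_of_nonpos hc hneg))

end ConvexOn

lemma AntitoneOn.exists_nonneg_nonpos_split {f : ℝ → ℝ} {a : ℝ} (hf : AntitoneOn f (Ioi a))
    (h : ∃ t > a, f t ≤ 0) :
    ∃ x₀, a ≤ x₀ ∧ (∀ t ∈ Ioo a x₀, 0 ≤ f t) ∧ ∀ t ∈ Ioi x₀, f t ≤ 0 := by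
  set N := {t | a < t ∧ f t ≤ 0}
  have hN : N.Nonempty := h
  have hNbdd : BddBelow N := ⟨a, fun t ht => ht.1.le⟩
  refine ⟨sInf N, le_csInf hN fun t ht => ht.1.le, fun t ht => ?_, fun t ht => ?_⟩
  · by_contra hlt
    exact notMem_of_lt_csInf ht.2 hNbdd ⟨ht.1, (not_le.1 hlt).le⟩
  · obtain ⟨s, hs, hst⟩ := (csInf_lt_iff hNbdd hN).1 ht
    exact (hf hs.1 (hs.1.trans hst) hst.le).trans hs.2

section SignChange

variable {f : ℝ → ℝ} {a x₀ : ℝ}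

lemma intervalIntegral_le_of_nonneg_of_nonpos {x : ℝ} (hx : a ≤ x)
    (hint : IntervalIntegrable f volume a x) (hint₀ : IntervalIntegrable f volume a x₀)
    (hpos : ∀ t ∈ Ioo a x₀, 0 ≤ f t) (hneg : ∀ t ∈ Ioi x₀, f t ≤ 0) :
    ∫ t in a..x, f t ≤ ∫ t in a..x₀, f t := by
  rw [← intervalIntegral.integral_add_adjacent_intervals hint₀ (hint₀.symm.trans hint),
    add_le_iff_nonpos_right]
  rcases le_total x₀ x with h | h
  · rw [intervalIntegral.integral_of_le h]
    exact setIntegral_nonpos measurableSet_Ioc fun t ht => hneg t ht.1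
  · rw [intervalIntegral.integral_symm, intervalIntegral.integral_of_le h,
      integral_Ioc_eq_integral_Ioo, neg_nonpos]
    exact setIntegral_nonneg measurableSet_Ioo fun t ht => hpos t ⟨hx.trans_lt ht.1, ht.2⟩

lemma lintegral_Ioi_ofReal_eq_of_nonneg_of_nonpos (hx₀ : a ≤ x₀)
    (hint : IntervalIntegrable f volume a x₀)
    (hpos : ∀ t ∈ Ioo a x₀, 0 ≤ f t) (hneg : ∀ t ∈ Ioi x₀, f t ≤ 0) :
    ∫⁻ t in Ioi a, ENNReal.ofReal (f t) = ENNReal.ofReal (∫ t in a..x₀, f t) := by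
  have hpos' : 0 ≤ᵐ[volume.restrict (Ioc a x₀)] f :=
    (ae_restrict_congr_set Ioo_ae_eq_Ioc).1 (ae_restrict_of_forall_mem measurableSet_Ioo hpos)
  rw [← Ioc_union_Ioi_eq_Ioi hx₀, lintegral_union measurableSet_Ioi (Ioc_disjoint_Ioi le_rfl),
    setLIntegral_eq_zero measurableSet_Ioi fun t ht => ENNReal.ofReal_eq_zero.2 (hneg t ht),
    add_zero, intervalIntegral.integral_of_le hx₀, ofReal_integral_eq_lintegral_ofReal
      ((intervalIntegrable_iff_integrableOn_Ioc_of_le hx₀).1 hint) hpos']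

end SignChange

section HalfLine

variable {φ : ℝ → ℝ} {φtop x : ℝ}

lemma rightDeriv_nonpos_of_convexOn_Ioi (htop : Tendsto φ atTop (𝓝 φtop))
    (hconv : ConvexOn ℝ (Ioi 0) φ) (hx : 0 < x) : derivWithin φ (Ioi x) x ≤ 0 :=
  hconv.rightDeriv_nonpos_of_tendsto_atTop (by rwa [interior_Ioi]) (Ioi_subset_Ioi hx.le) htop

lemma intervalIntegrable_rightDeriv_of_convexOn_Ioi (hc : ContinuousOn φ (Ici 0))
    (htop : Tendsto φ atTop (𝓝 φtop)) (hconv : ConvexOn ℝ (Ioi 0) φ) (hx : 0 ≤ x) :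
    IntervalIntegrable (fun t => derivWithin φ (Ioi t) t) volume 0 x :=
  (intervalIntegrable_iff_integrableOn_Ioc_of_le hx).2 <|
    (hconv.subset Ioo_subset_Ioi_self (convex_Ioo 0 x)).integrableOn_rightDeriv_of_nonpos
      (hc.mono Icc_subset_Ici_self) fun _ ht => rightDeriv_nonpos_of_convexOn_Ioi htop hconv ht.1

lemma integral_rightDeriv_eq_sub_of_convexOn_Ioi (hc : ContinuousOn φ (Ici 0))
    (htop : Tendsto φ atTop (𝓝 φtop)) (hconv : ConvexOn ℝ (Ioi 0) φ) (hx : 0 ≤ x) :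
    ∫ t in 0..x, derivWithin φ (Ioi t) t = φ x - φ 0 :=
  (hconv.subset Ioo_subset_Ioi_self (convex_Ioo 0 x)).integral_rightDeriv_eq_sub_of_nonpos hx
    (hc.mono Icc_subset_Ici_self) fun _ ht => rightDeriv_nonpos_of_convexOn_Ioi htop hconv ht.1

lemma ofReal_neg_legendreStar_eq_lintegral (hc : ContinuousOn φ (Ici 0))
    (htop : Tendsto φ atTop (𝓝 φtop)) (hconv : ConvexOn ℝ (Ioi 0) φ) {lam : ℝ} (hlam : 0 < lam) :
    ENNReal.ofReal (-legendreStar φ lam)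
      = ∫⁻ t in Ioi 0, ENNReal.ofReal (-derivWithin φ (Ioi t) t - lam) := by
  set g : ℝ → ℝ := fun t => -derivWithin φ (Ioi t) t - lam
  have hint : ∀ x, 0 ≤ x → IntervalIntegrable g volume 0 x := fun x hx =>
    (intervalIntegrable_rightDeriv_of_convexOn_Ioi hc htop hconv hx).neg.sub
      intervalIntegrable_const
  have hftc : ∀ x, 0 ≤ x → ∫ t in 0..x, g t = -(x * lam + φ x - φ 0) := fun x hx => by
    have hd := intervalIntegrable_rightDeriv_of_convexOn_Ioi hc htop hconv hx
    rw [intervalIntegral.integral_sub (f := fun t => -derivWithin φ (Ioi t) t) hd.neg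
      intervalIntegrable_const,
      intervalIntegral.integral_neg, integral_rightDeriv_eq_sub_of_convexOn_Ioi hc htop hconv hx,
      intervalIntegral.integral_const, smul_eq_mul]
    ring
  have hanti : AntitoneOn g (Ioi 0) := fun s hs t ht hst => by
    have := hconv.monotoneOn_rightDeriv (by rwa [interior_Ioi]) (by rwa [interior_Ioi]) hst
    simp only [g]
    linarith
  have hex : ∃ t > 0, g t ≤ 0 := by
    obtain ⟨t, ht, hlt⟩ := ((eventually_gt_atTop 0).and
      ((hconv.tendsto_rightDeriv_atTop_zero (by rw [interior_Ioi]) htop).eventually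
        (lt_mem_nhds (neg_neg_of_pos hlam)))).exists
    exact ⟨t, ht, by simp only [g]; linarith⟩
  obtain ⟨x₀, hx₀, hpos, hneg⟩ := hanti.exists_nonneg_nonpos_split hex
  have hstar : legendreStar φ lam = -∫ t in 0..x₀, g t := by
    refine IsLeast.csInf_eq ⟨⟨x₀, hx₀, by rw [hftc x₀ hx₀, neg_neg]⟩, ?_⟩
    rintro _ ⟨x, hx, rfl⟩
    have := intervalIntegral_le_of_nonneg_of_nonpos hx (hint x hx) (hint x₀ hx₀) hpos hneg
    rw [hftc x hx] at this
    linarith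
  rw [hstar, neg_neg, lintegral_Ioi_ofReal_eq_of_nonneg_of_nonpos hx₀ (hint x₀ hx₀) hpos hneg]

end HalfLine

section Kernel

variable {p a : ℝ}

lemma integral_rpow_sub_two_mul_sub (hp : 1 < p) (ha : 0 ≤ a) :
    ∫ l in 0..a, l ^ (p - 2) * (a - l) = a ^ p / ((p - 1) * p) := by
  have hexp : ∀ l ∈ uIcc 0 a, l ^ (p - 2) * (a - l) = a * l ^ (p - 2) - l ^ (p - 2 + 1) :=
    fun l hl => by
      rw [Real.rpow_add_one' ((uIcc_of_le ha ▸ hl).1) (by linarith)]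
      ring
  have hint : ∀ r : ℝ, -1 < r → IntervalIntegrable (fun l : ℝ => l ^ r) volume 0 a :=
    fun r hr => intervalIntegral.intervalIntegrable_rpow' hr
  rw [intervalIntegral.integral_congr hexp, intervalIntegral.integral_sub
    ((hint _ (by linarith)).const_mul a) (hint _ (by linarith)),
    intervalIntegral.integral_const_mul, integral_rpow (Or.inl (by linarith)),
    integral_rpow (Or.inl (by linarith)), Real.zero_rpow (by linarith),
    Real.zero_rpow (by linarith), show p - 2 + 1 + 1 = p by ring, show p - 2 + 1 = p - 1 by ring,
    sub_zero, sub_zero, mul_div_assoc', ← Real.rpow_one_add' ha (by linarith), add_sub_cancel]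
  have hp₁ : p - 1 ≠ 0 := by linarith
  have hp₀ : p ≠ 0 := by linarith
  field_simp
  ring

lemma ofReal_mul_lintegral_rpow_sub_two_mul_sub (hp : 1 < p) (ha : 0 ≤ a) :
    ENNReal.ofReal ((p - 1) * p) *
        ∫⁻ l in Ioi 0, ENNReal.ofReal (l ^ (p - 2)) * ENNReal.ofReal (a - l)
      = ENNReal.ofReal (a ^ p) := by
  have hcoef : 0 < (p - 1) * p := mul_pos (by linarith) (by linarith)
  have hint : IntervalIntegrable (fun l : ℝ => l ^ (p - 2) * (a - l)) volume 0 a :=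
    (intervalIntegral.intervalIntegrable_rpow' (by linarith)).mul_continuousOn
      (continuous_const.sub continuous_id).continuousOn
  rw [setLIntegral_congr_fun measurableSet_Ioi fun l (hl : 0 < l) =>
      (ENNReal.ofReal_mul (Real.rpow_nonneg hl.le _)).symm,
    lintegral_Ioi_ofReal_eq_of_nonneg_of_nonpos ha hint
      (fun l hl => mul_nonneg (Real.rpow_nonneg hl.1.le _) (sub_nonneg.2 hl.2.le))
      (fun l (hl : a < l) => mul_nonpos_of_nonneg_of_nonpos
        (Real.rpow_nonneg (ha.trans hl.le) _) (by linarith)),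
    integral_rpow_sub_two_mul_sub hp ha, ← ENNReal.ofReal_mul hcoef.le,
    mul_div_cancel₀ _ hcoef.ne']

end Kernel

theorem lintegral_rpow_neg_rightDeriv_eq {φ : ℝ → ℝ} {φtop p : ℝ} (hc : ContinuousOn φ (Ici 0))
    (htop : Tendsto φ atTop (𝓝 φtop)) (hconv : ConvexOn ℝ (Ioi 0) φ) (hp : 1 < p) :
    ∫⁻ x in Ioi 0, ENNReal.ofReal ((-derivWithin φ (Ioi x) x) ^ p)
      = ENNReal.ofReal ((p - 1) * p) *
        ∫⁻ lam in Ioi 0, ENNReal.ofReal (lam ^ (p - 2) * (-legendreStar φ lam)) := by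
  set c := ENNReal.ofReal ((p - 1) * p)
  set F : ℝ → ℝ → ℝ≥0∞ := fun t lam =>
    ENNReal.ofReal (lam ^ (p - 2)) * ENNReal.ofReal (-derivWithin φ (Ioi t) t - lam)
  have hF : Measurable (Function.uncurry F) := by
    have : Measurable fun q : ℝ × ℝ => derivWithin φ (Ioi q.1) q.1 :=
      (measurable_derivWithin_Ioi (f := φ)).comp measurable_fst
    simp only [F, Function.uncurry_def]
    fun_prop
  calc ∫⁻ x in Ioi 0, ENNReal.ofReal ((-derivWithin φ (Ioi x) x) ^ p)
      = ∫⁻ t in Ioi 0, c * ∫⁻ lam in Ioi 0, F t lam :=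
        setLIntegral_congr_fun measurableSet_Ioi fun t (ht : 0 < t) =>
          (ofReal_mul_lintegral_rpow_sub_two_mul_sub hp <| neg_nonneg.2 <|
            rightDeriv_nonpos_of_convexOn_Ioi htop hconv ht).symm
    _ = c * ∫⁻ lam in Ioi 0, ∫⁻ t in Ioi 0, F t lam := by
        rw [lintegral_const_mul' _ _ ENNReal.ofReal_ne_top,
          lintegral_lintegral_swap hF.aemeasurable]
    _ = c * ∫⁻ lam in Ioi 0, ENNReal.ofReal (lam ^ (p - 2) * (-legendreStar φ lam)) := by
        refine congrArg (c * ·) (setLIntegral_congr_fun measurableSet_Ioi fun lam hlam => ?_)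
        rw [lintegral_const_mul' _ _ ENNReal.ofReal_ne_top,
          ← ofReal_neg_legendreStar_eq_lintegral hc htop hconv hlam,
          ENNReal.ofReal_mul (Real.rpow_nonneg (le_of_lt hlam) _)]

/-- Let `φ` be continuous on `[0,∞]` (continuity on `[0,∞)` plus a finite
limit `φtop` at `∞`) and convex on `(0,∞)`, with right derivative `φ'`. Then for any real
`p > 1`, `∫_0^∞ (−φ'(x))^p dx = −(p−1)p ∫_0^∞ λ^{p−2} φ*(λ) dλ`, and in particular
`∫_0^∞ φ'(x)^2 dx = −2∫_0^∞ φ*(λ) dλ`. -/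
theorem integral_rpow_rightDeriv_eq_legendre
    (φ : ℝ → ℝ) (φtop : ℝ)
    (hc : ContinuousOn φ (Set.Ici 0))
    (htop : Filter.Tendsto φ Filter.atTop (nhds φtop))
    (hconv : ConvexOn ℝ (Set.Ioi 0) φ)
    (φ' : ℝ → ℝ) (hφ' : ∀ t ∈ Set.Ioi (0 : ℝ), φ' t = derivWithin φ (Set.Ioi t) t)
    (p : ℝ) (hp : 1 < p) :
    (∫⁻ x in Set.Ioi (0 : ℝ), ENNReal.ofReal ((-φ' x) ^ p)
        = ENNReal.ofReal ((p - 1) * p) *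
          ∫⁻ lam in Set.Ioi (0 : ℝ), ENNReal.ofReal (lam ^ (p - 2) * (-legendreStar φ lam))) ∧
    (∫⁻ x in Set.Ioi (0 : ℝ), ENNReal.ofReal ((φ' x) ^ 2)
        = 2 * ∫⁻ lam in Set.Ioi (0 : ℝ), ENNReal.ofReal (-legendreStar φ lam)) := by
  have hmoment : ∀ q : ℝ, 1 < q → ∫⁻ x in Ioi 0, ENNReal.ofReal ((-φ' x) ^ q)
      = ENNReal.ofReal ((q - 1) * q) *
        ∫⁻ lam in Ioi 0, ENNReal.ofReal (lam ^ (q - 2) * (-legendreStar φ lam)) := fun q hq => by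
    rw [← lintegral_rpow_neg_rightDeriv_eq hc htop hconv hq]
    exact setLIntegral_congr_fun measurableSet_Ioi fun t ht => by rw [hφ' t ht]
  refine ⟨hmoment p hp, ?_⟩
  have h2 := hmoment 2 one_lt_two
  norm_num [neg_sq] at h2
  exact h2
end

section
/- Let φ be a continuous function on [0,∞] convex on (0,∞) with φ*(λ) := inf_{x ∈ [0,∞]}(xλ + φ(x) − φ(0)). Then φ*(λ) = ∫_0^∞ min{λ + φ'(t), 0} dt for every λ ∈ [0,∞). -/
open Set Filter MeasureTheory Topology

/-!
A convex function with a finite limit at `∞` has nonpositive slopes, so its right derivative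
`φ'` is nonpositive; this makes `φ'` integrable on `(0, ∞)` and gives the fundamental theorem of
calculus `xλ + φ x - φ 0 = ∫₀ˣ (λ + φ')` for `x ≥ 0`. Since `λ + φ'` is nondecreasing, it is
nonpositive up to some `t₀ ∈ [0, ∞]` and nonnegative afterwards, so `x ↦ ∫₀ˣ (λ + φ')` attains
its infimum at `t₀` (or approaches it as `x → ∞` when `t₀ = ∞`), where it equals
`∫₀^∞ min (λ + φ') 0`.
-/

theorem ConvexOn.slope_nonpos_of_tendsto_atTop {S : Set ℝ} {f : ℝ → ℝ} {c x y : ℝ}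
    (hf : ConvexOn ℝ S f) (hS : Ici x ⊆ S) (hc : Tendsto f atTop (𝓝 c)) (hxy : x < y) :
    slope f x y ≤ 0 := by
  have hslope : Tendsto (fun z => slope f y z) atTop (𝓝 0) := by
    have h := (tendsto_inv_atTop_zero.comp (tendsto_atTop_add_const_right _ (-y) tendsto_id)).smul
      (hc.sub_const (f y))
    simp only [zero_smul] at h
    refine h.congr fun z => ?_
    simp [slope_def_module, sub_eq_add_neg]
  refine ge_of_tendsto hslope ?_
  filter_upwards [eventually_gt_atTop y] with z hyz
  rw [slope_comm]
  exact hf.slope_mono (hS hxy.le) ⟨hS self_mem_Ici, hxy.ne⟩ ⟨hS (hxy.trans hyz).le, hyz.ne'⟩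
    (hxy.trans hyz).le

theorem ConvexOn.rightDeriv_nonpos_of_tendsto_atTop_s5 {S : Set ℝ} {f : ℝ → ℝ} {c x : ℝ}
    (hf : ConvexOn ℝ S f) (hx : x ∈ interior S) (hS : Ici x ⊆ S) (hc : Tendsto f atTop (𝓝 c)) :
    derivWithin f (Ioi x) x ≤ 0 :=
  (hf.rightDeriv_le_slope_of_mem_interior hx (hS (lt_add_one x).le) (lt_add_one x)).trans
    (hf.slope_nonpos_of_tendsto_atTop hS hc (lt_add_one x))

theorem intervalIntegrable_deriv_right_of_nonpos {g g' : ℝ → ℝ} {a b : ℝ} (hab : a ≤ b)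
    (hcont : ContinuousOn g (Icc a b)) (hderiv : ∀ x ∈ Ioo a b, HasDerivWithinAt g (g' x) (Ioi x) x)
    (hg' : ∀ x ∈ Ioo a b, g' x ≤ 0) : IntervalIntegrable g' volume a b := by
  rw [intervalIntegrable_iff_integrableOn_Ioc_of_le hab]
  simpa using (intervalIntegral.integrableOn_deriv_right_of_nonneg hcont.neg
    (fun x hx => (hderiv x hx).neg) fun x hx => neg_nonneg.2 (hg' x hx)).neg

theorem IntegrableOn.min_const_add_zero {g : ℝ → ℝ} {s : Set ℝ} {c : ℝ} (hg : IntegrableOn g s)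
    (hc : 0 ≤ c) : IntegrableOn (fun t => min (c + g t) 0) s := by
  refine hg.norm.mono' ((hg.aestronglyMeasurable.const_add c).inf aestronglyMeasurable_const) ?_
  refine Eventually.of_forall fun t => ?_
  rw [Real.norm_eq_abs, Real.norm_eq_abs, abs_of_nonpos (min_le_right _ _), neg_le]
  exact le_min (by linarith [neg_abs_le (g t)]) (neg_nonpos.2 (abs_nonneg _))

section ConvexRightDeriv

variable {φ φ' : ℝ → ℝ} {a c : ℝ} (hconv : ConvexOn ℝ (Ioi a) φ)
  (hφ' : ∀ t ∈ Ioi a, φ' t = derivWithin φ (Ioi t) t)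
include hconv hφ'

theorem ConvexOn.hasDerivWithinAt_Ioi_of_eq_rightDeriv {t : ℝ} (ht : t ∈ Ioi a) :
    HasDerivWithinAt φ (φ' t) (Ioi t) t :=
  hφ' t ht ▸ hconv.hasDerivWithinAt_rightDeriv_of_mem_interior (by rwa [interior_Ioi])

theorem ConvexOn.monotoneOn_of_eq_rightDeriv : MonotoneOn φ' (Ioi a) := by
  have h := hconv.monotoneOn_rightDeriv
  rw [interior_Ioi] at h
  exact h.congr fun t ht => (hφ' t ht).symm

variable (htop : Tendsto φ atTop (𝓝 c))
include htop

theorem ConvexOn.nonpos_of_eq_rightDeriv {t : ℝ} (ht : t ∈ Ioi a) : φ' t ≤ 0 :=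
  hφ' t ht ▸ hconv.rightDeriv_nonpos_of_tendsto_atTop_s5 (by rwa [interior_Ioi])
    (Ici_subset_Ioi.2 ht) htop

variable (hcont : ContinuousOn φ (Ici a))
include hcont

theorem ConvexOn.intervalIntegrable_of_eq_rightDeriv {x : ℝ} (hx : a ≤ x) :
    IntervalIntegrable φ' volume a x :=
  intervalIntegrable_deriv_right_of_nonpos hx (hcont.mono Icc_subset_Ici_self)
    (fun _ ht => hconv.hasDerivWithinAt_Ioi_of_eq_rightDeriv hφ' ht.1)
    fun _ ht => hconv.nonpos_of_eq_rightDeriv hφ' htop ht.1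

theorem ConvexOn.integral_eq_sub_of_eq_rightDeriv {x : ℝ} (hx : a ≤ x) :
    ∫ t in a..x, φ' t = φ x - φ a :=
  intervalIntegral.integral_eq_sub_of_hasDeriv_right_of_le hx (hcont.mono Icc_subset_Ici_self)
    (fun _ ht => hconv.hasDerivWithinAt_Ioi_of_eq_rightDeriv hφ' ht.1)
    (hconv.intervalIntegrable_of_eq_rightDeriv hφ' htop hcont hx)

theorem ConvexOn.integrableOn_Ioi_of_eq_rightDeriv : IntegrableOn φ' (Ioi a) := by
  refine integrableOn_Ioi_of_intervalIntegral_norm_tendsto (φ a - c) a (fun x => ?_) tendsto_id ?_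
  · rcases le_total a x with hx | hx
    · exact (intervalIntegrable_iff_integrableOn_Ioc_of_le hx).1
        (hconv.intervalIntegrable_of_eq_rightDeriv hφ' htop hcont hx)
    · simp [Ioc_eq_empty_of_le hx]
  refine ((tendsto_const_nhds (x := φ a)).sub htop).congr' ?_
  filter_upwards [eventually_ge_atTop a] with x hx
  have hnorm : ∫ t in a..x, ‖φ' t‖ = -∫ t in a..x, φ' t := by
    rw [← intervalIntegral.integral_neg, intervalIntegral.integral_of_le hx,
      intervalIntegral.integral_of_le hx]
    exact setIntegral_congr_fun measurableSet_Ioc fun t ht =>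
      Real.norm_of_nonpos (hconv.nonpos_of_eq_rightDeriv hφ' htop ht.1)
  rw [id, hnorm, hconv.integral_eq_sub_of_eq_rightDeriv hφ' htop hcont hx, neg_sub]

end ConvexRightDeriv

theorem MonotoneOn.exists_nonpos_Ioo_nonneg_Ioi {f : ℝ → ℝ} {a s : ℝ} (hf : MonotoneOn f (Ioi a))
    (hs : a < s) (hfs : 0 ≤ f s) :
    ∃ t₀ ∈ Ici a, (∀ t ∈ Ioo a t₀, f t ≤ 0) ∧ ∀ t ∈ Ioi t₀, 0 ≤ f t := by
  set N := {u | a < u ∧ 0 ≤ f u}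
  have hne : N.Nonempty := ⟨s, hs, hfs⟩
  have hbdd : BddBelow N := ⟨a, fun t ht => ht.1.le⟩
  refine ⟨sInf N, le_csInf hne fun t ht => ht.1.le, fun t ht => ?_, fun t ht => ?_⟩
  · by_contra! hft
    exact (csInf_le hbdd ⟨ht.1, hft.le⟩).not_gt ht.2
  · obtain ⟨u, hu, hut⟩ := exists_lt_of_csInf_lt hne ht
    exact hu.2.trans (hf hu.1 (hu.1.trans hut) hut.le)

theorem MonotoneOn.sInf_intervalIntegral_eq_integral_Ioi_min {f : ℝ → ℝ} {a : ℝ}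
    (hf : MonotoneOn f (Ioi a)) (hfi : ∀ x ∈ Ici a, IntervalIntegrable f volume a x)
    (hmin : IntegrableOn (fun t => min (f t) 0) (Ioi a)) :
    sInf ((fun x => ∫ t in a..x, f t) '' Ici a) = ∫ t in Ioi a, min (f t) 0 := by
  set I := ∫ t in Ioi a, min (f t) 0
  have hsplit : ∀ x ∈ Ici a, (∫ t in a..x, min (f t) 0) + ∫ t in Ioi x, min (f t) 0 = I :=
    fun x hx => intervalIntegral.integral_interval_add_Ioi hmin (hmin.mono_set (Ioi_subset_Ioi hx))
  have hlower : ∀ x ∈ Ici a, I ≤ ∫ t in a..x, f t := by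
    intro x hx
    have htail : ∫ t in Ioi x, min (f t) 0 ≤ 0 :=
      setIntegral_nonpos measurableSet_Ioi fun t _ => min_le_right _ _
    have hle : ∫ t in a..x, min (f t) 0 ≤ ∫ t in a..x, f t :=
      intervalIntegral.integral_mono_on hx
        ((intervalIntegrable_iff_integrableOn_Ioc_of_le hx).2 (hmin.mono_set Ioc_subset_Ioi_self))
        (hfi x hx) fun t _ => min_le_left _ _
    linarith [hsplit x hx]
  refine IsGLB.csInf_eq ⟨forall_mem_image.2 hlower, fun b hb => ?_⟩ ⟨_, a, self_mem_Ici, rfl⟩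
  rw [mem_lowerBounds, forall_mem_image] at hb
  by_cases hsign : ∃ s ∈ Ioi a, 0 ≤ f s
  · obtain ⟨s, hs, hfs⟩ := hsign
    obtain ⟨t₀, ht₀, hneg, hpos⟩ := hf.exists_nonpos_Ioo_nonneg_Ioi hs hfs
    have htail : ∫ t in Ioi t₀, min (f t) 0 = 0 :=
      setIntegral_eq_zero_of_forall_eq_zero fun t ht => min_eq_right (hpos t ht)
    calc b ≤ ∫ t in a..t₀, f t := hb ht₀
      _ = ∫ t in a..t₀, min (f t) 0 :=
        intervalIntegral.integral_congr_Ioo_of_le ht₀ fun t ht => (min_eq_left (hneg t ht)).symm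
      _ = I := by rw [← hsplit t₀ ht₀, htail, add_zero]
  · push Not at hsign
    have hlim : Tendsto (fun x => ∫ t in a..x, f t) atTop (𝓝 I) := by
      refine (intervalIntegral_tendsto_integral_Ioi a hmin tendsto_id).congr' ?_
      filter_upwards [eventually_ge_atTop a] with x hx
      exact intervalIntegral.integral_congr_Ioo_of_le hx fun t ht =>
        min_eq_left (hsign t ht.1).le
    exact ge_of_tendsto hlim (by filter_upwards [eventually_ge_atTop a] with x hx using hb hx)

/-- Let `φ` be continuous on `[0,∞]` (continuity on `[0,∞)` plus a finite
limit `φtop` at `∞`) and convex on `(0,∞)`, with right derivative `φ'`. Then for every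
`λ ∈ [0,∞)` one has `φ*(λ) = ∫_0^∞ min (λ + φ'(t)) 0 dt`. -/
theorem legendreStar_eq_integral_min
    (φ : ℝ → ℝ) (φtop : ℝ)
    (hc : ContinuousOn φ (Set.Ici 0))
    (htop : Filter.Tendsto φ Filter.atTop (nhds φtop))
    (hconv : ConvexOn ℝ (Set.Ioi 0) φ)
    (φ' : ℝ → ℝ) (hφ' : ∀ t ∈ Set.Ioi (0 : ℝ), φ' t = derivWithin φ (Set.Ioi t) t)
    (lam : ℝ) (hlam : 0 ≤ lam) :
    legendreStar φ lam = ∫ t in Set.Ioi (0 : ℝ), min (lam + φ' t) 0 := by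
  have hφ'int : ∀ x ∈ Ici (0 : ℝ), IntervalIntegrable φ' volume 0 x := fun x hx =>
    hconv.intervalIntegrable_of_eq_rightDeriv hφ' htop hc hx
  have himage : (fun x => x * lam + φ x - φ 0) '' Ici 0 =
      (fun x => ∫ t in (0 : ℝ)..x, lam + φ' t) '' Ici 0 := by
    refine image_congr fun x hx => ?_
    rw [intervalIntegral.integral_add intervalIntegrable_const (hφ'int x hx),
      intervalIntegral.integral_const, hconv.integral_eq_sub_of_eq_rightDeriv hφ' htop hc hx,
      smul_eq_mul, sub_zero]
    ring
  rw [legendreStar, himage]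
  exact ((hconv.monotoneOn_of_eq_rightDeriv hφ').const_add lam)
    |>.sInf_intervalIntegral_eq_integral_Ioi_min
    (fun x hx => intervalIntegrable_const.add (hφ'int x hx))
    (IntegrableOn.min_const_add_zero (hconv.integrableOn_Ioi_of_eq_rightDeriv hφ' htop hc) hlam)
end

section
/- Let g : (0,∞) → ℝ be an asymptotically linear continuous function, i.e. there exists μ(g) ∈ ℝ such that φ_g(t) := g(t) − μ(g)t extends to a continuous function on [0,∞]. Then the convex envelope ğ of g (the largest convex function on (0,∞) bounded above by g) is also asymptotically linear, with μ(ğ) = μ(g) and ğ(0) = g(0), where g(0) and ğ(0) denote the limits at 0. -/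
/-!
Subtracting the line `μ t` from `g` shifts every affine minorant by that line, so the envelope
of `g` is `μ t` plus the envelope of `φ = g - μ t`. The function `φ` is bounded, hence so is its
envelope, which is convex on `(0, ∞)`; a convex function bounded above on a half-line is
antitone, so the envelope of `φ` has a limit at `∞`. At `0`, the envelope lies below `φ`, and
conversely every level `c < φ(0+)` is the value at `0` of an affine minorant of `φ`: near `0`
it stays below `c ≤ φ`, and with a steep enough negative slope it drops below `inf φ` further on.
-/

open Set Filter

/-- The convex envelope of `g : (0,∞) → ℝ`: the pointwise supremum of all affine functions
bounded above by `g` on `(0,∞)` (which is the largest convex function bounded above by `g`). -/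
noncomputable def convexEnvelope (g : ℝ → ℝ) (t : ℝ) : ℝ :=
  sSup {y : ℝ | ∃ a b : ℝ, (∀ s ∈ Set.Ioi (0 : ℝ), a * s + b ≤ g s) ∧ y = a * t + b}

open Topology Bornology

theorem ContinuousOn.isBounded_image_Ioi_of_tendsto {α : Type*} [PseudoMetricSpace α] {f : ℝ → α}
    {a b : α} (hf : ContinuousOn f (Ioi 0)) (h0 : Tendsto f (𝓝[>] 0) (𝓝 a))
    (hinf : Tendsto f atTop (𝓝 b)) : IsBounded (f '' Ioi 0) := by
  obtain ⟨δ, hδ, hnear⟩ := mem_nhdsGT_iff_exists_Ioo_subset.1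
    (h0.eventually (Metric.ball_mem_nhds a one_pos))
  obtain ⟨T, hfar⟩ := eventually_atTop.1 (hinf.eventually (Metric.ball_mem_nhds b one_pos))
  have hmid : IsBounded (f '' Icc δ T) :=
    (isCompact_Icc.image_of_continuousOn (hf.mono fun t ht => lt_of_lt_of_le hδ ht.1)).isBounded
  have hcover : Ioi 0 ⊆ Ioo 0 δ ∪ Icc δ T ∪ Ici T := fun t (ht : 0 < t) => by
    rcases lt_or_ge t δ with htδ | htδ
    · exact .inl (.inl ⟨ht, htδ⟩)
    rcases le_total t T with htT | htT
    · exact .inl (.inr ⟨htδ, htT⟩)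
    · exact .inr htT
  refine IsBounded.subset ?_ (image_mono hcover)
  rw [image_union, image_union]
  exact ((Metric.isBounded_ball.subset (image_subset_iff.2 hnear)).union hmid).union
    (Metric.isBounded_ball.subset (image_subset_iff.2 fun t => hfar t))

theorem ConvexOn.antitoneOn_of_bddAbove {f : ℝ → ℝ} {a : ℝ} (hf : ConvexOn ℝ (Ioi a) f)
    (hb : BddAbove (f '' Ioi a)) : AntitoneOn f (Ioi a) := by
  intro x hx y hy hxy
  rcases hxy.eq_or_lt with rfl | hxy
  · rfl
  by_contra! hlt
  obtain ⟨B, hB⟩ := hb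
  have hgrow : Tendsto (fun z => (z - x) * (f y - f x)) atTop atTop :=
    (tendsto_atTop_add_const_right _ (-x) tendsto_id).atTop_mul_const (sub_pos.2 hlt)
  obtain ⟨z, hbig, hyz⟩ :=
    ((hgrow.eventually_gt_atTop ((y - x) * (B - f x))).and (eventually_gt_atTop y)).exists
  have hzB : f z ≤ B := hB (mem_image_of_mem f (lt_trans hx (hxy.trans hyz)))
  -- `(z - x) f y ≤ (z - y) f x + (y - x) f z`, so `f z` grows at least like `(z - x) (f y - f x)`
  have hsec := hf.secant_mono_aux1 hx (lt_trans hx (hxy.trans hyz)) hxy hyz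
  nlinarith [sub_pos.2 hxy]

theorem AntitoneOn.exists_tendsto_atTop {β : Type*} [ConditionallyCompleteLinearOrder β]
    [TopologicalSpace β] [OrderTopology β] {f : ℝ → β} {a : ℝ} (hf : AntitoneOn f (Ioi a))
    (hb : BddBelow (f '' Ioi a)) : ∃ L, Tendsto f atTop (𝓝 L) := by
  have hmax : ∀ t, max t (a + 1) ∈ Ioi a := fun t => lt_max_of_lt_right (lt_add_one a)
  have hanti : Antitone fun t => f (max t (a + 1)) :=
    fun s t hst => hf (hmax s) (hmax t) (max_le_max_right _ hst)
  refine ⟨_, (tendsto_atTop_ciInf hanti (hb.mono ?_)).congr' ?_⟩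
  · rintro _ ⟨t, rfl⟩
    exact mem_image_of_mem f (hmax t)
  · filter_upwards [eventually_ge_atTop (a + 1)] with t ht
    rw [max_eq_left ht]

section ConvexEnvelope

variable {g : ℝ → ℝ} {t : ℝ}

theorem le_convexEnvelope {a b : ℝ} (hab : ∀ s ∈ Ioi (0 : ℝ), a * s + b ≤ g s) (ht : 0 < t) :
    a * t + b ≤ convexEnvelope g t :=
  le_csSup ⟨g t, by rintro _ ⟨a', b', h, rfl⟩; exact h t ht⟩ ⟨a, b, hab, rfl⟩

theorem convexEnvelope_le (hg : ∃ a b : ℝ, ∀ s ∈ Ioi (0 : ℝ), a * s + b ≤ g s) (ht : 0 < t) :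
    convexEnvelope g t ≤ g t := by
  obtain ⟨a, b, hab⟩ := hg
  exact csSup_le ⟨_, a, b, hab, rfl⟩ (by rintro _ ⟨a', b', h, rfl⟩; exact h t ht)

theorem convexOn_convexEnvelope (hg : ∃ a b : ℝ, ∀ s ∈ Ioi (0 : ℝ), a * s + b ≤ g s) :
    ConvexOn ℝ (Ioi 0) (convexEnvelope g) := by
  refine ⟨convex_Ioi 0, fun x hx y hy p q hp hq hpq => ?_⟩
  obtain ⟨a, b, hab⟩ := hg
  refine csSup_le ⟨_, a, b, hab, rfl⟩ ?_
  rintro _ ⟨a', b', h, rfl⟩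
  calc a' * (p • x + q • y) + b' = p * (a' * x + b') + q * (a' * y + b') := by
        rw [smul_eq_mul, smul_eq_mul]; linear_combination (-b') * hpq
    _ ≤ p • convexEnvelope g x + q • convexEnvelope g y := by
        rw [smul_eq_mul, smul_eq_mul]
        gcongr
        exacts [le_convexEnvelope h hx, le_convexEnvelope h hy]

theorem convexEnvelope_sub_mul (hg : ∃ a b : ℝ, ∀ s ∈ Ioi (0 : ℝ), a * s + b ≤ g s) (μ : ℝ)
    (ht : 0 < t) : convexEnvelope (fun s => g s - μ * s) t = convexEnvelope g t - μ * t := by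
  obtain ⟨a, b, hab⟩ := hg
  have hab' : ∀ s ∈ Ioi (0 : ℝ), (a - μ) * s + b ≤ g s - μ * s := fun s hs => by
    linarith [hab s hs]
  apply le_antisymm
  · refine csSup_le ⟨_, a - μ, b, hab', rfl⟩ ?_
    rintro _ ⟨a', b', h, rfl⟩
    have := le_convexEnvelope (g := g) (a := a' + μ) (b := b')
      (fun s hs => by linarith [h s hs]) ht
    linarith
  · rw [sub_le_iff_le_add]
    refine csSup_le ⟨_, a, b, hab, rfl⟩ ?_
    rintro _ ⟨a', b', h, rfl⟩
    have := le_convexEnvelope (g := fun s => g s - μ * s) (a := a' - μ) (b := b')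
      (fun s hs => by linarith [h s hs]) ht
    linarith

theorem exists_mul_add_le_of_bddBelow {c : ℝ} (hbdd : BddBelow (g '' Ioi 0))
    (hc : ∀ᶠ s in 𝓝[>] 0, c ≤ g s) : ∃ a : ℝ, ∀ s ∈ Ioi (0 : ℝ), a * s + c ≤ g s := by
  obtain ⟨B, hB⟩ := hbdd
  obtain ⟨δ, hδ, hnear⟩ := mem_nhdsGT_iff_exists_Ioo_subset.1 hc
  -- the line through `(0, c)` and `(δ, c - |c - B|)`: below `c` on `(0, δ)`, below `B` after `δ`
  refine ⟨-|c - B| / δ, fun s (hs : 0 < s) => ?_⟩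
  have hslope : -|c - B| / δ ≤ 0 := div_nonpos_of_nonpos_of_nonneg (neg_nonpos.2 (abs_nonneg _))
    (le_of_lt hδ)
  rcases lt_or_ge s δ with hsδ | hsδ
  · have hcs : c ≤ g s := hnear ⟨hs, hsδ⟩
    linarith [mul_nonpos_of_nonpos_of_nonneg hslope hs.le]
  · have : -|c - B| / δ * s ≤ -|c - B| / δ * δ := mul_le_mul_of_nonpos_left hsδ hslope
    rw [div_mul_cancel₀ _ (ne_of_gt hδ)] at this
    linarith [hB (mem_image_of_mem g hs), le_abs_self (c - B)]

theorem tendsto_convexEnvelope_nhdsGT_zero {c : ℝ} (hbdd : BddBelow (g '' Ioi 0))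
    (h0 : Tendsto g (𝓝[>] 0) (𝓝 c)) : Tendsto (convexEnvelope g) (𝓝[>] 0) (𝓝 c) := by
  obtain ⟨B, hB⟩ := hbdd
  have hg : ∃ a b : ℝ, ∀ s ∈ Ioi (0 : ℝ), a * s + b ≤ g s :=
    ⟨0, B, fun s hs => by simpa using hB (mem_image_of_mem g hs)⟩
  refine tendsto_order.2 ⟨fun c' hc' => ?_, fun c' hc' => ?_⟩
  · obtain ⟨c'', hc'c'', hc''⟩ := exists_between hc'
    obtain ⟨a, ha⟩ := exists_mul_add_le_of_bddBelow ⟨B, hB⟩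
      ((h0.eventually (eventually_gt_nhds hc'')).mono fun _ => le_of_lt)
    have hline : Tendsto (fun s => a * s + c'') (𝓝[>] 0) (𝓝 c'') :=
      (((continuous_const_mul a).add continuous_const).tendsto' 0 c'' (by simp)).mono_left
        nhdsWithin_le_nhds
    filter_upwards [hline.eventually (eventually_gt_nhds hc'c''), self_mem_nhdsWithin]
      with s hs hs0
    exact hs.trans_le (le_convexEnvelope ha hs0)
  · filter_upwards [h0.eventually (eventually_lt_nhds hc'), self_mem_nhdsWithin] with s hs hs0
    exact (convexEnvelope_le hg hs0).trans_lt hs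

theorem exists_tendsto_convexEnvelope_atTop (hbdd : IsBounded (g '' Ioi 0)) :
    ∃ L, Tendsto (convexEnvelope g) atTop (𝓝 L) := by
  obtain ⟨⟨B₀, hB₀⟩, ⟨B₁, hB₁⟩⟩ := isBounded_iff_bddBelow_bddAbove.1 hbdd
  have hlow : ∀ s ∈ Ioi (0 : ℝ), 0 * s + B₀ ≤ g s := fun s hs => by
    simpa using hB₀ (mem_image_of_mem g hs)
  have hconv := convexOn_convexEnvelope ⟨0, B₀, hlow⟩
  refine (hconv.antitoneOn_of_bddAbove ⟨B₁, ?_⟩).exists_tendsto_atTop ⟨B₀, ?_⟩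
  · rintro _ ⟨s, hs, rfl⟩
    exact (convexEnvelope_le ⟨0, B₀, hlow⟩ hs).trans (hB₁ (mem_image_of_mem g hs))
  · rintro _ ⟨s, hs, rfl⟩
    simpa using le_convexEnvelope hlow hs

end ConvexEnvelope

/-- Let `g : (0,∞) → ℝ` be an asymptotically linear continuous function:
there are `μ, c0, cinf ∈ ℝ` with `g t − μ t → c0` as `t ↓ 0` and `g t − μ t → cinf` as
`t → ∞`. Then the convex envelope `ğ` of `g` is also asymptotically linear continuous with
the same asymptotic slope `μ(ğ) = μ(g) = μ` (i.e. `ğ t − μ t` is continuous on `(0,∞)` and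
has finite limits at `0` and at `∞`), and `ğ(0) = g(0)`, i.e. the limit of `ğ` at `0` equals
`c0`. -/
theorem convexEnvelope_asymptoticallyLinear
    (g : ℝ → ℝ) (hg : ContinuousOn g (Set.Ioi 0))
    (μ c0 cinf : ℝ)
    (h0 : Filter.Tendsto (fun t => g t - μ * t) (nhdsWithin 0 (Set.Ioi 0)) (nhds c0))
    (hinf : Filter.Tendsto (fun t => g t - μ * t) Filter.atTop (nhds cinf)) :
    ContinuousOn (convexEnvelope g) (Set.Ioi 0) ∧
      (∃ L : ℝ, Filter.Tendsto (fun t => convexEnvelope g t - μ * t) Filter.atTop (nhds L)) ∧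
      Filter.Tendsto (fun t => convexEnvelope g t - μ * t)
        (nhdsWithin 0 (Set.Ioi 0)) (nhds c0) := by
  set φ : ℝ → ℝ := fun t => g t - μ * t
  have hbdd : IsBounded (φ '' Ioi 0) :=
    (hg.sub (continuous_const_mul μ).continuousOn).isBounded_image_Ioi_of_tendsto h0 hinf
  obtain ⟨B, hB⟩ := (isBounded_iff_bddBelow_bddAbove.1 hbdd).1
  have hminor : ∃ a b : ℝ, ∀ s ∈ Ioi (0 : ℝ), a * s + b ≤ g s :=
    ⟨μ, B, fun s hs => by linarith [hB (mem_image_of_mem φ hs)]⟩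
  have hshift : EqOn (convexEnvelope φ) (fun t => convexEnvelope g t - μ * t) (Ioi 0) :=
    fun t ht => convexEnvelope_sub_mul hminor μ ht
  refine ⟨(convexOn_convexEnvelope hminor).continuousOn isOpen_Ioi, ?_, ?_⟩
  · obtain ⟨L, hL⟩ := exists_tendsto_convexEnvelope_atTop hbdd
    exact ⟨L, hL.congr' (eventuallyEq_of_mem (Ioi_mem_atTop 0) hshift)⟩
  · exact (tendsto_convexEnvelope_nhdsGT_zero ⟨B, hB⟩ h0).congr'
      (eventuallyEq_of_mem self_mem_nhdsWithin hshift)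
end

section
/- Let X be a regular projective curve over a field k and D an ℝ-divisor on X with deg(D) ≥ 0. Then lim_{n→∞} dim_k H^0(nD)/n = deg(D). -/
/-! `H⁰(nD) = H⁰(⌊nD⌋)`, and `deg ⌊nD⌋` lies within `c = Σ_{x ∈ supp D} [k(x):k]` of `n · deg D`.
Once `deg ⌊nD⌋ > 2g - 2`, Riemann–Roch gives `dim H⁰(⌊nD⌋) = deg ⌊nD⌋ + 1 - g`, so in all cases
`dim H⁰(nD) ≥ n · deg D - c - 2g`. For the upper bound, since `deg ⌊nD⌋ ≥ -c`, adding a fixed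
multiple `m · x₀` of one closed point puts every `⌊nD⌋ + m · x₀` in the Riemann–Roch range, so
`dim H⁰(nD) ≤ n · deg D + m [k(x₀):k] + 1 - g`. Dividing by `n`, both bounds tend to `deg D`. -/

open scoped BigOperators Classical

/-- An abstract package of the data attached to a regular projective curve `X` over a field
`k`: `F = Rat(X)` is the function field, `P = X^{(1)}` is the set of closed points,
`degp x = [k(x):k]`, `ord x f` is the order of vanishing of a nonzero rational function `f`
at `x`, `H0 D` is the Riemann–Roch space of an ℝ-divisor `D : P → ℝ` (a `k`-subspace of
`F`), and `riemannRoch` is the Riemann–Roch estimate for integral divisors of large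
degree. -/
structure CurveData (k F P : Type*) [Field k] [Field F] [Algebra k F] : Type _ where
  genus : ℕ
  degp : P → ℕ
  degp_pos : ∀ x, 0 < degp x
  ord : P → F → ℤ
  ord_mul : ∀ (x : P) {f g : F}, f ≠ 0 → g ≠ 0 → ord x (f * g) = ord x f + ord x g
  ord_support_finite : ∀ {f : F}, f ≠ 0 → (Function.support fun x => ord x f).Finite
  ord_deg_zero : ∀ {f : F}, f ≠ 0 → (∑ᶠ x, (ord x f : ℝ) * (degp x : ℝ)) = 0
  finitely_generated : ∃ S : Finset F, IntermediateField.adjoin k (S : Set F) = ⊤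
  H0 : (P → ℝ) → Submodule k F
  mem_H0 : ∀ (D : P → ℝ) (f : F), f ∈ H0 D ↔ (f ≠ 0 → ∀ x, 0 ≤ (ord x f : ℝ) + D x)
  H0_finite : ∀ D, Module.Finite k (H0 D)
  riemannRoch : ∀ D : P → ℝ, (Function.support D).Finite →
    (∀ x, ∃ n : ℤ, (n : ℝ) = D x) →
    2 * (genus : ℝ) - 2 < ∑ᶠ x, D x * (degp x : ℝ) →
    (Module.finrank k ↥(H0 D) : ℝ) = (∑ᶠ x, D x * (degp x : ℝ)) + 1 - genus

variable {k F P : Type*} [Field k] [Field F] [Algebra k F]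

/-- The degree of an ℝ-divisor `D`: `deg D = Σ_x D(x)·[k(x):k]`. -/
noncomputable def CurveData.degD (C : CurveData k F P) (D : P → ℝ) : ℝ :=
  ∑ᶠ x, D x * (C.degp x : ℝ)

/-- `E` is a principal ℝ-divisor, i.e. lies in the ℝ-linear span of the divisors of nonzero
rational functions (the image of `Rat(X)^×_ℝ → nDiv_ℝ(X)`). -/
def CurveData.IsPrincipalR (C : CurveData k F P) (E : P → ℝ) : Prop :=
  E ∈ Submodule.span ℝ {E' : P → ℝ | ∃ f : F, f ≠ 0 ∧ E' = fun x => (C.ord x f : ℝ)}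

lemma support_floor_subset {P : Type*} (E : P → ℝ) :
    Function.support (fun x => (⌊E x⌋ : ℝ)) ⊆ Function.support E :=
  fun x hx h0 => hx (by simp [h0])

lemma tendsto_add_mul_div_natCast (a b : ℝ) :
    Filter.Tendsto (fun n : ℕ => (b + a * n) / n) Filter.atTop (nhds a) := by
  simpa using tendsto_add_mul_div_add_mul_atTop_nhds b 0 a one_ne_zero

namespace CurveData

variable (C : CurveData k F P)

lemma H0_mono {D₁ D₂ : P → ℝ} (h : D₁ ≤ D₂) : C.H0 D₁ ≤ C.H0 D₂ := by
  intro f hf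
  rw [C.mem_H0] at hf ⊢
  exact fun hf0 x => (hf hf0 x).trans (by linarith [h x])

lemma H0_floor (E : P → ℝ) : C.H0 (fun x => (⌊E x⌋ : ℝ)) = C.H0 E := by
  ext f
  simp only [C.mem_H0]
  refine forall_congr' fun _ => forall_congr' fun x => ?_
  rw [← neg_le_iff_add_nonneg', ← neg_le_iff_add_nonneg']
  exact_mod_cast Int.le_floor

lemma degD_eq_sum {E : P → ℝ} {S : Finset P} (hS : Function.support E ⊆ S) :
    C.degD E = ∑ x ∈ S, E x * C.degp x :=
  finsum_eq_sum_of_support_subset _ ((Function.support_mul_subset_left _ _).trans hS)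

lemma degD_const_mul (a : ℝ) (E : P → ℝ) : C.degD (fun x => a * E x) = a * C.degD E := by
  simp only [degD, mul_finsum, mul_assoc]

lemma degD_add {E₁ E₂ : P → ℝ} (h₁ : (Function.support E₁).Finite)
    (h₂ : (Function.support E₂).Finite) : C.degD (E₁ + E₂) = C.degD E₁ + C.degD E₂ := by
  simp only [degD, Pi.add_apply, add_mul]
  exact finsum_add_distrib (h₁.subset (Function.support_mul_subset_left _ _))
    (h₂.subset (Function.support_mul_subset_left _ _))

lemma degD_single (x₀ : P) (a : ℝ) : C.degD (Pi.single x₀ a) = a * C.degp x₀ := by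
  rw [degD, finsum_eq_single _ x₀ fun x hx => by simp [hx]]
  simp

lemma degD_floor_le {E : P → ℝ} {S : Finset P} (hS : Function.support E ⊆ S) :
    C.degD (fun x => (⌊E x⌋ : ℝ)) ≤ C.degD E := by
  rw [C.degD_eq_sum hS, C.degD_eq_sum ((support_floor_subset E).trans hS)]
  exact Finset.sum_le_sum fun x _ =>
    mul_le_mul_of_nonneg_right (Int.floor_le _) (Nat.cast_nonneg _)

lemma degD_sub_sum_degp_le_degD_floor {E : P → ℝ} {S : Finset P}
    (hS : Function.support E ⊆ S) :
    C.degD E - ∑ x ∈ S, (C.degp x : ℝ) ≤ C.degD (fun x => (⌊E x⌋ : ℝ)) := by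
  rw [C.degD_eq_sum hS, C.degD_eq_sum ((support_floor_subset E).trans hS),
    ← Finset.sum_sub_distrib]
  refine Finset.sum_le_sum fun x _ => ?_
  rw [← sub_one_mul]
  exact mul_le_mul_of_nonneg_right (Int.sub_one_lt_floor _).le (Nat.cast_nonneg _)

lemma finrank_H0_eq {E : P → ℝ} (hfin : (Function.support E).Finite)
    (hint : ∀ x, ∃ n : ℤ, (n : ℝ) = E x) (hdeg : 2 * (C.genus : ℝ) - 2 < C.degD E) :
    (Module.finrank k (C.H0 E) : ℝ) = C.degD E + 1 - C.genus :=
  C.riemannRoch E hfin hint hdeg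

lemma degD_sub_two_mul_genus_le_finrank_H0 {E : P → ℝ} (hfin : (Function.support E).Finite)
    (hint : ∀ x, ∃ n : ℤ, (n : ℝ) = E x) :
    C.degD E - 2 * C.genus ≤ Module.finrank k (C.H0 E) := by
  by_cases hdeg : 2 * (C.genus : ℝ) - 2 < C.degD E
  · rw [C.finrank_H0_eq hfin hint hdeg]
    linarith [(C.genus.cast_nonneg : (0 : ℝ) ≤ C.genus)]
  · linarith [(Nat.cast_nonneg _ : (0 : ℝ) ≤ Module.finrank k (C.H0 E))]

lemma finrank_H0_le_of_lt {E : P → ℝ} (hfin : (Function.support E).Finite)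
    (hint : ∀ x, ∃ n : ℤ, (n : ℝ) = E x) (x₀ : P) (m : ℕ)
    (hm : 2 * (C.genus : ℝ) - 2 < C.degD E + m) :
    Module.finrank k (C.H0 E) ≤ C.degD E + m * C.degp x₀ + 1 - C.genus := by
  set E' := E + Pi.single x₀ (m : ℝ)
  have hsingle : (Function.support (Pi.single x₀ (m : ℝ))).Finite :=
    (Set.finite_singleton x₀).subset Pi.support_single_subset
  have hfin' : (Function.support E').Finite :=
    (hfin.union hsingle).subset (Function.support_add _ _)
  have hle : C.H0 E ≤ C.H0 E' := C.H0_mono fun x =>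
    le_add_of_nonneg_right (by rw [Pi.single_apply]; split_ifs <;> positivity)
  have hdeg : C.degD E' = C.degD E + m * C.degp x₀ := by
    rw [C.degD_add hfin hsingle, C.degD_single]
  have hm_le : (m : ℝ) ≤ m * C.degp x₀ :=
    le_mul_of_one_le_right m.cast_nonneg (by exact_mod_cast C.degp_pos x₀)
  have hint' : ∀ x, ∃ n : ℤ, (n : ℝ) = E' x := by
    intro x
    obtain ⟨n, hn⟩ := hint x
    by_cases hx : x = x₀
    · exact ⟨n + m, by simp [E', hx, hn]⟩
    · exact ⟨n, by simp [E', hx, hn]⟩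
  have := C.H0_finite E'
  calc (Module.finrank k (C.H0 E) : ℝ) ≤ Module.finrank k (C.H0 E') := by
        exact_mod_cast Submodule.finrank_mono hle
    _ = C.degD E + m * C.degp x₀ + 1 - C.genus := by
        rw [C.finrank_H0_eq hfin' hint' (by linarith), hdeg]

lemma degD_sub_le_finrank_H0 {E : P → ℝ} {S : Finset P} (hS : Function.support E ⊆ S) :
    C.degD E - (∑ x ∈ S, (C.degp x : ℝ) + 2 * C.genus) ≤ Module.finrank k (C.H0 E) := by
  rw [← C.H0_floor E]
  have := C.degD_sub_two_mul_genus_le_finrank_H0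
    (S.finite_toSet.subset ((support_floor_subset E).trans hS)) fun x => ⟨_, rfl⟩
  linarith [C.degD_sub_sum_degp_le_degD_floor hS]

lemma exists_finrank_H0_le_degD_add (S : Finset P) :
    ∃ K : ℝ, ∀ E : P → ℝ, Function.support E ⊆ S → 0 ≤ C.degD E →
      Module.finrank k (C.H0 E) ≤ C.degD E + K := by
  rcases isEmpty_or_nonempty P with hP | ⟨⟨x₀⟩⟩
  · refine ⟨Module.finrank k (C.H0 0), fun E _ _ => ?_⟩
    rw [Subsingleton.elim E 0, show C.degD 0 = 0 from finsum_of_isEmpty _, zero_add]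
  set c := ∑ x ∈ S, (C.degp x : ℝ)
  set m := ⌈c⌉₊ + 2 * C.genus
  refine ⟨m * C.degp x₀ + 1 - C.genus, fun E hS hE => ?_⟩
  rw [← C.H0_floor E]
  have hm : 2 * (C.genus : ℝ) - 2 < C.degD (fun x => (⌊E x⌋ : ℝ)) + m := by
    have := C.degD_sub_sum_degp_le_degD_floor hS
    have := Nat.le_ceil c
    push_cast [m]
    linarith
  have := C.finrank_H0_le_of_lt (S.finite_toSet.subset ((support_floor_subset E).trans hS))
    (fun x => ⟨_, rfl⟩) x₀ m hm
  linarith [C.degD_floor_le hS]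

end CurveData

/-- Let `X` be a regular projective curve over a field `k` and `D` an
ℝ-divisor on `X` with `deg D ≥ 0`. Then `dim_k H⁰(nD)/n → deg D` as `n → ∞`. -/
theorem tendsto_finrank_H0_div_eq_deg
    (C : CurveData k F P) (D : P → ℝ) (hD : (Function.support D).Finite)
    (hdeg : 0 ≤ C.degD D) :
    Filter.Tendsto
      (fun n : ℕ => (Module.finrank k ↥(C.H0 (fun x => (n : ℝ) * D x)) : ℝ) / (n : ℝ))
      Filter.atTop (nhds (C.degD D)) := by
  obtain ⟨K, hK⟩ := C.exists_finrank_H0_le_degD_add hD.toFinset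
  have hS : ∀ n : ℕ, Function.support (fun x => (n : ℝ) * D x) ⊆ hD.toFinset := fun n => by
    rw [Set.Finite.coe_toFinset]
    exact Function.support_mul_subset_right _ _
  refine tendsto_of_tendsto_of_tendsto_of_le_of_le'
    (tendsto_add_mul_div_natCast _ (-(∑ x ∈ hD.toFinset, (C.degp x : ℝ) + 2 * C.genus)))
    (tendsto_add_mul_div_natCast _ K) ?_ ?_ <;>
  filter_upwards [Filter.eventually_gt_atTop 0] with n hn <;>
  rw [div_le_div_iff_of_pos_right (by exact_mod_cast hn)]
  · linarith [C.degD_sub_le_finrank_H0 (hS n), C.degD_const_mul n D]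
  · have := hK _ (hS n) (by rw [C.degD_const_mul]; exact mul_nonneg n.cast_nonneg hdeg)
    rw [C.degD_const_mul] at this
    linarith
end

section
/- Let X be a regular projective curve over a field k, and let V_• be a graded linear series on X such that V_n ≠ {0} for some n ≥ 1. Then ℕ(V_•) := {n ≥ 1 : V_n ≠ {0}} is a sub-semigroup of (ℕ_{≥1}, +), and for all sufficiently large n ∈ ℕ(V_•) the field k(V_n) generated by ratios of nonzero elements of V_n equals k(V_•). -/
/-!
Multiplying by a nonzero element of `V n` shows that `V m * V n ≠ 0` and `k(V m) ⊆ k(V (m + n))`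
whenever `V m, V n ≠ 0`. The intermediate fields of `Rat(X) / k` satisfy the ascending chain
condition: if `f` has pole divisor of degree `c` and is transcendental over a field `E`, and
`b₁, …, bₘ ∈ E` are linearly independent over `k`, then the `m (t + 1)` functions `bᵢ fʲ`
(`j ≤ t`) are independent and lie in an `H⁰` of dimension `t c + O(1)` by Riemann–Roch, so
`m ≤ c`. Hence `Rat(X)` is finite over every intermediate field containing a transcendental
element, and the algebraic closure of `k` in `Rat(X)` is finite over `k`. So some `k(V n₀)`
contains all the others, and as every large multiple of the gcd of `ℕ(V)` lies in the monoid
generated by `ℕ(V)`, every large `n ∈ ℕ(V)` has `k(V n) ⊇ k(V n₀) = k(V)`.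
-/

open scoped BigOperators Classical

variable {k F P : Type*} [Field k] [Field F] [Algebra k F]

/-- The set of ratios `f/g` of nonzero elements of a `k`-subspace `W` of `Rat(X)`. -/
def ratioSet (W : Submodule k F) : Set F :=
  {r : F | ∃ f ∈ W, ∃ g ∈ W, f ≠ 0 ∧ g ≠ 0 ∧ r = f / g}

open Filter

theorem le_of_eventually_mul_le_mul_add {a c K : ℝ} (h : ∀ᶠ t : ℕ in atTop, a * t ≤ c * t + K) :
    a ≤ c := by
  by_contra! hca
  obtain ⟨t, ht, htK⟩ := (h.and (eventually_gt_atTop ⌈K / (a - c)⌉₊)).exists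
  have := Nat.lt_of_ceil_lt htK
  rw [div_lt_iff₀ (sub_pos.mpr hca)] at this
  linarith

theorem Transcendental.linearIndependent_pow {R A : Type*} [CommRing R] [CommRing A] [Algebra R A]
    {x : A} (hx : Transcendental R x) : LinearIndependent R fun n : ℕ => x ^ n := by
  simpa [Function.comp_def, Polynomial.aeval_monomial] using
    (Polynomial.basisMonomials R).linearIndependent.map'
    (Polynomial.aeval x).toLinearMap (LinearMap.ker_eq_bot.mpr (transcendental_iff_injective.mp hx))

theorem linearIndependent_mul_pow {E : IntermediateField k F} {ι : Type*} {b : ι → E}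
    (hb : LinearIndependent k b) {f : F} (hf : Transcendental E f) (n : ℕ) :
    LinearIndependent k fun p : ι × Fin n => (b p.1 : F) * f ^ (p.2 : ℕ) := by
  simpa [Algebra.smul_def] using
    linearIndependent_smul hb (hf.linearIndependent_pow.comp _ Fin.val_injective)

theorem finiteDimensional_of_fg_top_of_isAlgebraic {K : Type*} [Field K] [Algebra k K]
    [Algebra K F] [IsScalarTower k K F] [Algebra.IsAlgebraic K F]
    (h : (⊤ : IntermediateField k F).FG) :
    FiniteDimensional K F := by
  obtain ⟨S, hS⟩ := h
  have htop : IntermediateField.adjoin K (S : Set F) = ⊤ := by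
    refine eq_top_iff.mpr fun x _ => ?_
    have hx : x ∈ IntermediateField.adjoin k (S : Set F) := hS ▸ trivial
    have hle : IntermediateField.adjoin k (S : Set F) ≤
        (IntermediateField.adjoin K (S : Set F)).restrictScalars k :=
      IntermediateField.adjoin_le_iff.mpr fun y hy => IntermediateField.subset_adjoin K _ hy
    exact hle hx
  have := IntermediateField.finiteDimensional_adjoin (K := K) (S := (S : Set F))
    fun x _ => (Algebra.IsAlgebraic.isAlgebraic x).isIntegral
  rw [htop] at this
  exact IntermediateField.topEquiv.toLinearEquiv.finiteDimensional

namespace IntermediateField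

theorem exists_maximal_of_finiteDimensional {s : Set (IntermediateField k F)} (hs : s.Nonempty)
    (hfin : ∀ K ∈ s, FiniteDimensional K F) : ∃ K₀ ∈ s, ∀ K ∈ s, ¬K₀ < K := by
  obtain ⟨K₀, hK₀, hmin⟩ :=
    (measure fun K : IntermediateField k F => Module.finrank K F).wf.has_min s hs
  have := hfin K₀ hK₀
  exact ⟨K₀, hK₀, fun K hK hlt => hmin K hK (finrank_lt_of_gt hlt)⟩

theorem exists_maximal_of_le (L : IntermediateField k F) [FiniteDimensional k L]
    {s : Set (IntermediateField k F)} (hs : s.Nonempty) (hle : ∀ K ∈ s, K ≤ L) :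
    ∃ K₀ ∈ s, ∀ K ∈ s, ¬K₀ < K := by
  obtain ⟨K₀, hK₀, hmin⟩ := (measure fun K : IntermediateField k F =>
    Module.finrank k L - Module.finrank k K).wf.has_min s hs
  refine ⟨K₀, hK₀, fun K hK hlt => hmin K hK ?_⟩
  have : FiniteDimensional k K :=
    .of_injective (inclusion (hle K hK)).toLinearMap (inclusion (hle K hK)).injective
  have hL := finrank_le_of_le_right (hle K hK)
  have hK₀K : Module.finrank k K₀ < Module.finrank k K :=
    lt_of_not_ge fun h => hlt.ne (eq_of_le_of_finrank_le hlt.le h)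
  show Module.finrank k L - Module.finrank k K < Module.finrank k L - Module.finrank k K₀
  omega

end IntermediateField

namespace CurveData

variable (C : CurveData k F P)

theorem ord_one (x : P) : C.ord x 1 = 0 := by
  have h := C.ord_mul x (one_ne_zero (α := F)) (one_ne_zero (α := F))
  rw [mul_one] at h
  omega

theorem ord_pow (x : P) {f : F} (hf : f ≠ 0) (n : ℕ) : C.ord x (f ^ n) = n * C.ord x f := by
  induction n with
  | zero => simpa using C.ord_one x
  | succ n ih =>
    rw [pow_succ, C.ord_mul x (pow_ne_zero n hf) hf, ih]
    push_cast
    ring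

theorem hasFiniteSupport_mul_degp {D : P → ℤ} (hD : D.HasFiniteSupport) :
    (fun x => (D x : ℝ) * C.degp x).HasFiniteSupport :=
  hD.subset fun x hx h => hx (by simp [h])

theorem degD_nsmul_add {D E : P → ℤ} (hD : D.HasFiniteSupport) (hE : E.HasFiniteSupport)
    (t : ℕ) : C.degD (fun x => ((t • D + E) x : ℝ)) =
      t * C.degD (fun x => (D x : ℝ)) + C.degD (fun x => (E x : ℝ)) := by
  unfold degD
  rw [mul_finsum' _ _ (C.hasFiniteSupport_mul_degp hD), ← finsum_add_distrib
    ((C.hasFiniteSupport_mul_degp hD).fun_mul_right _) (C.hasFiniteSupport_mul_degp hE)]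
  refine finsum_congr fun x => ?_
  simp only [Pi.add_apply, nsmul_eq_mul, Pi.mul_apply, Pi.natCast_apply, Int.cast_add,
    Int.cast_mul, Int.cast_natCast]
  ring

theorem degD_pos {D : P → ℤ} (hD : D.HasFiniteSupport) (hD0 : 0 ≤ D) (hne : D ≠ 0) :
    0 < C.degD (fun x => (D x : ℝ)) := by
  obtain ⟨x, hx⟩ := Function.ne_iff.mp hne
  refine finsum_pos (fun y => mul_nonneg (Int.cast_nonneg (hD0 y)) (Nat.cast_nonneg _))
    ⟨x, mul_pos (Int.cast_pos.mpr ((hD0 x).lt_of_ne' hx)) (by exact_mod_cast C.degp_pos x)⟩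
    (C.hasFiniteSupport_mul_degp hD)

theorem exists_finrank_H0_le {D E : P → ℤ} (hD : D.HasFiniteSupport) (hE : E.HasFiniteSupport)
    (hD0 : 0 ≤ D) : ∃ K : ℝ, ∀ᶠ t : ℕ in atTop,
      (Module.finrank k (C.H0 fun x => ((t • D + E) x : ℝ)) : ℝ) ≤
        t * C.degD (fun x => (D x : ℝ)) + K := by
  rcases eq_or_ne D 0 with rfl | hne
  · refine ⟨Module.finrank k (C.H0 fun x => (E x : ℝ)), .of_forall fun t => ?_⟩
    rw [smul_zero, zero_add]
    simp [degD]
  set d := C.degD fun x => (D x : ℝ)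
  have hd : 0 < d := C.degD_pos hD hD0 hne
  refine ⟨C.degD (fun x => (E x : ℝ)) + 1 - C.genus, ?_⟩
  filter_upwards [eventually_gt_atTop ⌈(2 * C.genus - 2 - C.degD fun x => (E x : ℝ)) / d⌉₊]
    with t ht
  have hdeg := C.degD_nsmul_add hD hE t
  have hlarge : 2 * (C.genus : ℝ) - 2 < C.degD fun x => ((t • D + E) x : ℝ) := by
    have := Nat.lt_of_ceil_lt ht
    rw [div_lt_iff₀ hd] at this
    linarith
  have hsupp : (fun x => ((t • D + E) x : ℝ)).HasFiniteSupport :=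
    ((hD.nsmul t).add hE).subset fun x hx h => hx (by simp only [h, Int.cast_zero])
  rw [C.riemannRoch _ hsupp (fun x => ⟨_, rfl⟩) hlarge]
  change C.degD _ + 1 - _ ≤ _
  linarith

def poleDiv (f : F) : P → ℤ := fun x => max (-C.ord x f) 0

theorem poleDiv_nonneg (f : F) : 0 ≤ C.poleDiv f := fun _ => le_max_right _ _

theorem neg_poleDiv_le_ord (f : F) (x : P) : -C.poleDiv f x ≤ C.ord x f :=
  neg_le.mpr (le_max_left _ _)

theorem hasFiniteSupport_poleDiv {f : F} (hf : f ≠ 0) : (C.poleDiv f).HasFiniteSupport :=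
  (C.ord_support_finite hf).subset fun x hx h => hx (by simp [poleDiv, h])

theorem mul_pow_mem_H0 {g f : F} (hg : g ≠ 0) (hf : f ≠ 0) {B : P → ℤ}
    (hB : C.poleDiv g ≤ B) {j t : ℕ} (hj : j ≤ t) :
    g * f ^ j ∈ C.H0 fun x => ((t • C.poleDiv f + B) x : ℝ) := by
  refine (C.mem_H0 _ _).mpr fun _ x => ?_
  have hjt : (j : ℤ) ≤ t := by exact_mod_cast hj
  have hgx := C.neg_poleDiv_le_ord g x
  have hfx := C.neg_poleDiv_le_ord f x
  have hf0x : 0 ≤ C.poleDiv f x := C.poleDiv_nonneg f x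
  have hBx := hB x
  rw [C.ord_mul x hg (pow_ne_zero _ hf), C.ord_pow x hf]
  simp only [Pi.add_apply, nsmul_eq_mul, Pi.mul_apply, Pi.natCast_apply]
  exact_mod_cast (show (0 : ℤ) ≤ _ by nlinarith)

theorem card_le_degD_poleDiv (E : IntermediateField k F) {ι : Type*} [Fintype ι] {b : ι → E}
    (hb : LinearIndependent k b) {f : F} (hf : Transcendental E f) :
    (Fintype.card ι : ℝ) ≤ C.degD fun x => (C.poleDiv f x : ℝ) := by
  have hf0 : f ≠ 0 := fun h => hf (h ▸ isAlgebraic_zero)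
  have hb0 : ∀ i, (b i : F) ≠ 0 := fun i => by simpa using hb.ne_zero i
  set B : P → ℤ := fun x => ∑ i, C.poleDiv (b i) x
  have hB : ∀ i, C.poleDiv (b i) ≤ B := fun i x =>
    Finset.single_le_sum (fun i _ => C.poleDiv_nonneg (b i) x) (Finset.mem_univ i)
  obtain ⟨K, hK⟩ := C.exists_finrank_H0_le (C.hasFiniteSupport_poleDiv hf0)
    (Function.HasFiniteSupport.sum (fun i => C.hasFiniteSupport_poleDiv (hb0 i)) Finset.univ)
    (C.poleDiv_nonneg f)
  refine le_of_eventually_mul_le_mul_add (K := K) (hK.mono fun t ht => ?_)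
  set W := C.H0 fun x => ((t • C.poleDiv f + B) x : ℝ)
  have hmem : ∀ p : ι × Fin (t + 1), (b p.1 : F) * f ^ (p.2 : ℕ) ∈ W := fun p =>
    C.mul_pow_mem_H0 (hb0 p.1) hf0 (hB p.1) (Nat.lt_succ_iff.mp p.2.isLt)
  have := C.H0_finite fun x => ((t • C.poleDiv f + B) x : ℝ)
  have hcard : Fintype.card ι * (t + 1) ≤ Module.finrank k W := by
    simpa using (LinearIndependent.of_comp W.subtype (v := fun p => ⟨_, hmem p⟩)
      (linearIndependent_mul_pow hb hf (t + 1))).fintype_card_le_finrank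
  have hcard' : (Fintype.card ι : ℝ) * (t + 1) ≤ Module.finrank k W := by exact_mod_cast hcard
  nlinarith

theorem isAlgebraic_of_transcendental_mem (C : CurveData k F P) (K : IntermediateField k F)
    {u : F} (hu : Transcendental k u) (huK : u ∈ K) (s : F) : IsAlgebraic K s := by
  by_contra hs
  obtain ⟨m, hm⟩ := exists_nat_gt (C.degD fun x => (C.poleDiv s x : ℝ))
  have hb : LinearIndependent k fun i : Fin m => (⟨u ^ (i : ℕ), pow_mem huK _⟩ : K) :=
    .of_comp K.val.toLinearMap (hu.linearIndependent_pow.comp _ Fin.val_injective)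
  have := C.card_le_degD_poleDiv K hb hs
  rw [Fintype.card_fin] at this
  linarith

theorem finiteDimensional_algebraicClosure (C : CurveData k F P) :
    FiniteDimensional k (algebraicClosure k F) := by
  by_cases h : ∃ f : F, Transcendental k f
  · obtain ⟨f, hf⟩ := h
    refine Module.rank_lt_aleph0_iff.mp ((rank_le (n := ⌊C.degD fun x => (C.poleDiv f x : ℝ)⌋₊)
      fun s hs => Nat.le_floor ?_).trans_lt Cardinal.natCast_lt_aleph0)
    simpa using C.card_le_degD_poleDiv _ hs hf.algebraicClosure
  · have : Algebra.IsAlgebraic k F := ⟨fun f => not_not.mp (not_exists.mp h f)⟩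
    have := finiteDimensional_of_fg_top_of_isAlgebraic (K := k) C.finitely_generated
    infer_instance

theorem wellFoundedGT_intermediateField (C : CurveData k F P) :
    WellFoundedGT (IntermediateField k F) := by
  refine ⟨WellFounded.wellFounded_iff_has_min.mpr fun s hs => ?_⟩
  by_cases h : ∃ K ∈ s, ∃ u ∈ K, Transcendental k u
  · obtain ⟨K, hK, u, huK, hu⟩ := h
    obtain ⟨K₀, ⟨hK₀, huK₀⟩, hmax⟩ :=
      IntermediateField.exists_maximal_of_finiteDimensional (s := {K ∈ s | u ∈ K})
        ⟨K, hK, huK⟩ fun K hK =>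
          have : Algebra.IsAlgebraic K F := ⟨C.isAlgebraic_of_transcendental_mem K hu hK.2⟩
          finiteDimensional_of_fg_top_of_isAlgebraic C.finitely_generated
    exact ⟨K₀, hK₀, fun K hK hlt => hmax K ⟨hK, hlt.le huK₀⟩ hlt⟩
  · simp only [not_exists, not_and] at h
    have := C.finiteDimensional_algebraicClosure
    exact IntermediateField.exists_maximal_of_le _ hs fun K hK x hx =>
      mem_algebraicClosure_iff.mpr (not_not.mp (h K hK x hx))

end CurveData

theorem exists_forall_le_of_add_mem {α : Type*} [PartialOrder α] [WellFoundedGT α] (K : ℕ → α)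
    {S : Set ℕ} (hS : S.Nonempty) (hadd : ∀ m ∈ S, ∀ n ∈ S, m + n ∈ S)
    (hmono : ∀ m, ∀ n ∈ S, K m ≤ K (m + n)) : ∃ n₀ ∈ S, ∀ m ∈ S, K m ≤ K n₀ := by
  obtain ⟨_, ⟨n₀, hn₀, rfl⟩, hmax⟩ := wellFounded_gt.has_min (K '' S) (hS.image K)
  refine ⟨n₀, hn₀, fun m hm => ?_⟩
  have heq : K n₀ = K (n₀ + m) :=
    (hmono n₀ m hm).eq_of_not_lt (hmax _ ⟨_, hadd n₀ hn₀ m hm, rfl⟩)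
  rw [heq, add_comm]
  exact hmono m n₀ hn₀

theorem exists_forall_ge_eq_biSup_of_add_mem {α : Type*} [CompleteLattice α] [WellFoundedGT α]
    (K : ℕ → α) {S : Set ℕ} (hadd : ∀ m ∈ S, ∀ n ∈ S, m + n ∈ S)
    (hmono : ∀ m, ∀ n ∈ S, K m ≤ K (m + n)) :
    ∃ N, ∀ n ∈ S, N ≤ n → K n = ⨆ m ∈ S, K m := by
  rcases S.eq_empty_or_nonempty with rfl | hS
  · exact ⟨0, by simp⟩
  obtain ⟨n₀, hn₀, hmax⟩ := exists_forall_le_of_add_mem K hS hadd hmono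
  obtain ⟨N, hN⟩ := Nat.exists_mem_closure_of_ge S
  have hclosure : ∀ d ∈ AddSubmonoid.closure S, ∀ m, K m ≤ K (m + d) := by
    intro d hd
    induction hd using AddSubmonoid.closure_induction with
    | mem d hd => exact fun m => hmono m d hd
    | zero => simp
    | add d e _ _ hd he => exact fun m => (hd m).trans ((he (m + d)).trans_eq (by rw [add_assoc]))
  refine ⟨n₀ + N, fun n hn hle => le_antisymm (le_biSup K hn) (iSup₂_le fun m hm => ?_)⟩
  have hd : n - n₀ ∈ AddSubmonoid.closure S := hN _ (by omega)
    (Nat.dvd_sub (Nat.setGcd_dvd_of_mem hn) (Nat.setGcd_dvd_of_mem hn₀))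
  have := hclosure _ hd n₀
  rw [Nat.add_sub_cancel' (by omega)] at this
  exact (hmax m hm).trans this

theorem ratioSet_bot : ratioSet (⊥ : Submodule k F) = ∅ :=
  Set.eq_empty_of_forall_notMem fun _ ⟨_, hf, _, _, hf0, _⟩ => hf0 ((Submodule.mem_bot k).mp hf)

theorem ratioSet_subset_of_mul_mem {W W' : Submodule k F} {h : F} (hh : h ≠ 0)
    (hWW' : ∀ f ∈ W, f * h ∈ W') : ratioSet W ⊆ ratioSet W' := by
  rintro r ⟨f, hf, g, hg, hf0, hg0, rfl⟩
  exact ⟨f * h, hWW' f hf, g * h, hWW' g hg, mul_ne_zero hf0 hh, mul_ne_zero hg0 hh,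
    (mul_div_mul_right f g hh).symm⟩

theorem adjoin_iUnion_ratioSet (V : ℕ → Submodule k F) (T : Set ℕ) :
    IntermediateField.adjoin k (⋃ m ∈ T, ratioSet (V m)) =
      ⨆ m ∈ {m ∈ T | V m ≠ ⊥}, IntermediateField.adjoin k (ratioSet (V m)) := by
  simp only [IntermediateField.adjoin_iUnion]
  refine le_antisymm (iSup₂_le fun m hm => ?_) (iSup₂_le fun m hm => le_iSup₂_of_le m hm.1 le_rfl)
  by_cases hV : V m = ⊥
  · simp [hV, ratioSet_bot]
  · exact le_iSup₂_of_le m ⟨hm, hV⟩ le_rfl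

theorem gradedLinearSeries_semigroup_and_stable_field_general
    (C : CurveData k F P) (V : ℕ → Submodule k F)
    (hmul : ∀ m n : ℕ, ∀ f ∈ V m, ∀ g ∈ V n, f * g ∈ V (m + n)) :
    (∀ m n : ℕ, (1 ≤ m ∧ V m ≠ ⊥) → (1 ≤ n ∧ V n ≠ ⊥) → (1 ≤ m + n ∧ V (m + n) ≠ ⊥)) ∧
    ∃ N : ℕ, ∀ n ≥ N, 1 ≤ n → V n ≠ ⊥ →
      IntermediateField.adjoin k (ratioSet (V n))
        = IntermediateField.adjoin k (⋃ m ∈ {m : ℕ | 1 ≤ m}, ratioSet (V m)) := by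
  set S := {n | 1 ≤ n ∧ V n ≠ ⊥}
  set K : ℕ → IntermediateField k F := fun n => IntermediateField.adjoin k (ratioSet (V n))
  have hsemi : ∀ m ∈ S, ∀ n ∈ S, m + n ∈ S := by
    rintro m ⟨hm1, hm⟩ n ⟨-, hn⟩
    obtain ⟨f, hf, hf0⟩ := Submodule.exists_mem_ne_zero_of_ne_bot hm
    obtain ⟨g, hg, hg0⟩ := Submodule.exists_mem_ne_zero_of_ne_bot hn
    exact ⟨by omega, (Submodule.ne_bot_iff _).mpr ⟨f * g, hmul m n f hf g hg, mul_ne_zero hf0 hg0⟩⟩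
  have hmono : ∀ m, ∀ n ∈ S, K m ≤ K (m + n) := by
    rintro m n ⟨-, hn⟩
    obtain ⟨h, hh, hh0⟩ := Submodule.exists_mem_ne_zero_of_ne_bot hn
    exact IntermediateField.adjoin.mono _ _ _
      (ratioSet_subset_of_mul_mem hh0 fun f hf => hmul m n f hf h hh)
  have := C.wellFoundedGT_intermediateField
  obtain ⟨N, hN⟩ := exists_forall_ge_eq_biSup_of_add_mem K hsemi hmono
  exact ⟨fun m n hm hn => hsemi m hm n hn, N, fun n hn h1 hVn =>
    (hN n ⟨h1, hVn⟩ hn).trans (adjoin_iUnion_ratioSet V _).symm⟩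

/-- Let `V_•` be a graded linear series on a regular projective curve `X`
over `k` (a graded sub-`k`-algebra of `Rat(X)[T]` with `V_0 = k`, some `V_n ≠ 0` for
`n ≥ 1`, and `V_n ⊆ H⁰(nD)` for a fixed ℝ-divisor `D`). Then
`ℕ(V_•) = {n ≥ 1 : V_n ≠ 0}` is a sub-semigroup of `(ℕ_{≥1},+)`, and for all sufficiently
large `n ∈ ℕ(V_•)` the field `k(V_n)` generated by ratios of nonzero elements of `V_n`
equals `k(V_•)`. -/
theorem gradedLinearSeries_semigroup_and_stable_field
    (C : CurveData k F P) (V : ℕ → Submodule k F)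
    (hV0 : V 0 = 1)
    (hmul : ∀ m n : ℕ, ∀ f ∈ V m, ∀ g ∈ V n, f * g ∈ V (m + n))
    (hne : ∃ n : ℕ, 1 ≤ n ∧ V n ≠ ⊥)
    (hbound : ∃ D : P → ℝ, (Function.support D).Finite ∧
      ∀ n : ℕ, V n ≤ C.H0 (fun x => (n : ℝ) * D x)) :
    (∀ m n : ℕ, (1 ≤ m ∧ V m ≠ ⊥) → (1 ≤ n ∧ V n ≠ ⊥) → (1 ≤ m + n ∧ V (m + n) ≠ ⊥)) ∧
    ∃ N : ℕ, ∀ n ≥ N, 1 ≤ n → V n ≠ ⊥ →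
      IntermediateField.adjoin k (ratioSet (V n))
        = IntermediateField.adjoin k (⋃ m ∈ {m : ℕ | 1 ≤ m}, ratioSet (V m)) :=
  gradedLinearSeries_semigroup_and_stable_field_general C V hmul
end

section
/- Let (D,g) be a metrised ℝ-divisor on a regular projective curve X over a trivially valued field. Then the essential infimum of the height function, μ_ess(D,g) := sup_{Z finite ⊂ X^{(1)}} inf_{x ∈ X^{(1)}∖Z} φ_g(x₀), equals g(η₀), the value of g at the generic point of X^an. -/
open scoped BigOperators Classical

variable {k F P : Type*} [Field k] [Field F] [Algebra k F]

open scoped BigOperators Classical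

/-- A Green function on the tree `𝒯(X^{(1)})` of length 1 (the Berkovich analytification
of a curve over a trivially valued field), described through its restrictions to the
branches: `val x t` is the value at the point of `[η₀, x₀]` with parameter `t ∈ [0,∞)`,
`slope x = μ_x(g)` is the asymptotic slope along the branch of `x` (so the value at the
leaf `x₀` is `±∞` when `slope x ≠ 0`), and `root = g(η₀)`. Continuity on the tree amounts
to continuity along each branch, existence of the limit of `φ_g = g − slope·t` at each
leaf, finiteness of the support of the slopes, and the condition that for every `ε > 0`
the bounded part `φ_g` stays `ε`-close to `g(η₀)` on all but finitely many branches. -/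
structure GreenFunction (P : Type*) : Type _ where
  val : P → ℝ → ℝ
  slope : P → ℝ
  root : ℝ
  val_zero : ∀ x, val x 0 = root
  contOn : ∀ x, ContinuousOn (val x) (Set.Ici 0)
  slope_support_finite : (Function.support slope).Finite
  phi_tendsto : ∀ x, ∃ L : ℝ,
    Filter.Tendsto (fun t => val x t - slope x * t) Filter.atTop (nhds L)
  rootCont : ∀ ε > (0:ℝ), {x : P | ∃ t ≥ (0:ℝ), ε ≤ |val x t - slope x * t - root|}.Finite

namespace GreenFunction

variable {P : Type*}

/-- Sum of two Green functions (corresponding to the sum of metrised ℝ-divisors). -/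
noncomputable def add (g h : GreenFunction P) : GreenFunction P where
  val x t := g.val x t + h.val x t
  slope x := g.slope x + h.slope x
  root := g.root + h.root
  val_zero x := by simp [g.val_zero, h.val_zero]
  contOn x := (g.contOn x).add (h.contOn x)
  slope_support_finite :=
    (g.slope_support_finite.union h.slope_support_finite).subset
      (Function.support_add _ _)
  phi_tendsto x := by
    obtain ⟨L1, h1⟩ := g.phi_tendsto x
    obtain ⟨L2, h2⟩ := h.phi_tendsto x
    refine ⟨L1 + L2, ?_⟩
    have h3 := h1.add h2
    convert h3 using 2 with t
    ring
  rootCont := by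
    intro ε hε
    have h1 := g.rootCont (ε / 2) (by linarith)
    have h2 := h.rootCont (ε / 2) (by linarith)
    refine (h1.union h2).subset ?_
    intro x hx
    obtain ⟨t, ht, habs⟩ := hx
    by_contra hc
    simp only [Set.mem_union, Set.mem_setOf_eq, not_or, not_exists] at hc
    push_neg at hc
    obtain ⟨hc1, hc2⟩ := hc
    have e1 := hc1 t ht
    have e2 := hc2 t ht
    have tri : |(g.val x t + h.val x t) - (g.slope x + h.slope x) * t - (g.root + h.root)|
        ≤ |g.val x t - g.slope x * t - g.root| + |h.val x t - h.slope x * t - h.root| := by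
      have h4 := abs_add_le (g.val x t - g.slope x * t - g.root)
        (h.val x t - h.slope x * t - h.root)
      have h5 : (g.val x t + h.val x t) - (g.slope x + h.slope x) * t - (g.root + h.root)
          = (g.val x t - g.slope x * t - g.root) + (h.val x t - h.slope x * t - h.root) := by
        ring
      rw [h5]
      exact h4
    linarith

/-- Adding a real constant `c` to a Green function (i.e. `g + c`). -/
noncomputable def addConst (g : GreenFunction P) (c : ℝ) : GreenFunction P where
  val x t := g.val x t + c
  slope := g.slope
  root := g.root + c
  val_zero x := by simp [g.val_zero]
  contOn x := (g.contOn x).add continuousOn_const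
  slope_support_finite := g.slope_support_finite
  phi_tendsto x := by
    obtain ⟨L, hL⟩ := g.phi_tendsto x
    refine ⟨L + c, ?_⟩
    have h3 := hL.add (tendsto_const_nhds (x := c))
    convert h3 using 2 with t
    ring
  rootCont := by
    intro ε hε
    refine (g.rootCont ε hε).subset ?_
    rintro x ⟨t, ht, habs⟩
    refine ⟨t, ht, ?_⟩
    have : (fun (x : P) (t : ℝ) => g.val x t + c) x t - g.slope x * t - (g.root + c)
        = g.val x t - g.slope x * t - g.root := by ring
    rwa [this] at habs

end GreenFunction

variable {k F P : Type*} [Field k] [Field F] [Algebra k F]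

/-- The essential infimum `λ_ess(D,g)`: the supremum over `φ ∈ Γ(D)_ℝ^×` (represented by
the corresponding principal ℝ-divisors `E = (φ)` with `E + D ≥ 0`) of the infimum over the
Berkovich tree `X^an` of `g_{(φ)} + g` (on the branch of `x` at parameter `t`, this
function has value `E x · t + g(ξ_x(t))`). Here `D = g.slope`. -/
noncomputable def CurveData.lambdaEss (C : CurveData k F P) (g : GreenFunction P) : EReal :=
  ⨆ E ∈ {E : P → ℝ | C.IsPrincipalR E ∧ ∀ x, 0 ≤ E x + g.slope x},
    ⨅ (x : P) (t : ℝ) (_ : 0 ≤ t), ((E x * t + g.val x t : ℝ) : EReal)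

/-- `μ_{inf,x}(g) = inf_{ξ ∈ (η₀,x₀)} g(ξ)/t(ξ) ∈ ℝ ∪ {−∞}`, as an extended real. -/
noncomputable def GreenFunction.muInfX (g : GreenFunction P) (x : P) : EReal :=
  ⨅ (t : ℝ) (_ : 0 < t), ((g.val x t / t : ℝ) : EReal)

/-- Conversion `EReal → ℝ≥0∞` (positive part, sending `⊤` to `⊤`). -/
noncomputable def erealToENNReal (e : EReal) : ENNReal :=
  if e = ⊤ then ⊤ else ENNReal.ofReal e.toReal

/-- The Arakelov degree of an ultrametrically normed finite-dimensional vector space over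
a trivially valued field: minus the logarithm of the determinant norm of a basis wedge.
(Over a trivially valued field, for an ultrametric norm `N`, the determinant norm of a
generator of the determinant line is the infimum over bases of the product of the norms,
so `deghat = sup over bases of −Σ_i log N(bᵢ)`.) -/
noncomputable def deghat (k V : Type*) [Field k] [AddCommGroup V] [Module k V]
    (N : V → ℝ) : ℝ :=
  ⨆ b : Module.Basis (Fin (Module.finrank k V)) k V, -∑ i, Real.log (N (b i))

/-- The positive Arakelov degree: the supremum of the Arakelov degrees of all subspaces. -/
noncomputable def deghatPlus (k V : Type*) [Field k] [AddCommGroup V] [Module k V]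
    (N : V → ℝ) : ℝ :=
  ⨆ W : Submodule k V, deghat k W (fun w => N (w : V))

/-- The norm `‖f‖_{ng} = exp(−inf_{ξ∈X^an}(g_{(f)} + ng)(ξ))` on `H⁰(nD)`, for `f ≠ 0`. -/
noncomputable def CurveData.gnorm (C : CurveData k F P) (g : GreenFunction P) (n : ℕ)
    (f : F) : ℝ :=
  if f = 0 then 0
  else Real.exp (-sInf {r : ℝ | ∃ (x : P) (t : ℝ), 0 ≤ t ∧
    r = (C.ord x f : ℝ) * t + (n : ℝ) * g.val x t})

/-- The `χ`-volume of a metrised ℝ-divisor `(D, g)` with `D = g.slope`: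
`limsup_n 2·deghat(H⁰(nD), ‖·‖_{ng})/n²`. -/
noncomputable def CurveData.volChi (C : CurveData k F P) (g : GreenFunction P) : ℝ :=
  Filter.limsup (fun n : ℕ =>
    deghat k ↥(C.H0 fun x => (n : ℝ) * g.slope x) (fun f => C.gnorm g n (f : F))
      / ((n : ℝ) ^ 2 / 2)) Filter.atTop

/-- The arithmetic volume of a metrised ℝ-divisor `(D, g)` with `D = g.slope`:
`limsup_n 2·deghat₊(H⁰(nD), ‖·‖_{ng})/n²`. -/
noncomputable def CurveData.volHat (C : CurveData k F P) (g : GreenFunction P) : ℝ :=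
  Filter.limsup (fun n : ℕ =>
    deghatPlus k ↥(C.H0 fun x => (n : ℝ) * g.slope x) (fun f => C.gnorm g n (f : F))
      / ((n : ℝ) ^ 2 / 2)) Filter.atTop

/-- A metrised ℝ-divisor `(D,g)` (with `D = g.slope`) is big if `vol-hat(D,g) > 0`. -/
def CurveData.Big (C : CurveData k F P) (g : GreenFunction P) : Prop :=
  0 < C.volHat g

/-- A metrised ℝ-divisor is pseudo-effective if its sum with every big metrised ℝ-divisor
is big. -/
def CurveData.PseudoEffective (C : CurveData k F P) (g : GreenFunction P) : Prop :=
  ∀ g₀ : GreenFunction P, C.Big g₀ → C.Big (g.add g₀)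

/-- The height of a closed point `x` with respect to `(D,g)`: `h_{(D,g)}(x) = φ_g(x₀)`,
the limit at the leaf `x₀` of the bounded part `φ_g = g − slope·t` of `g`. -/
noncomputable def GreenFunction.heightAt (g : GreenFunction P) (x : P) : ℝ :=
  Filter.limUnder Filter.atTop (fun t => g.val x t - g.slope x * t)

/-- The essential infimum of the height function:
`μ_ess(D,g) = sup_{Z ⊂ X^{(1)} finite} inf_{x ∉ Z} h_{(D,g)}(x)`. -/
noncomputable def GreenFunction.muEss (g : GreenFunction P) : EReal :=
  ⨆ Z : Finset P, ⨅ (x : P) (_ : x ∉ Z), ((g.heightAt x : ℝ) : EReal)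

/-- Let `(D,g)` be a metrised ℝ-divisor on a regular projective curve
over a trivially valued field (`D = g.slope`; a curve has infinitely many closed points).
Then the essential infimum of the height function equals `g(η₀)`. -/
theorem muEss_eq_root
    (C : CurveData k F P) [Infinite P] (g : GreenFunction P) :
    g.muEss = ((g.root : ℝ) : EReal) := by
  
  have hL : ∀ x : P, Filter.Tendsto (fun t => g.val x t - g.slope x * t) Filter.atTop
      (nhds (g.heightAt x)) := by
    intro x
    obtain ⟨L, hT⟩ := g.phi_tendsto x
    have : g.heightAt x = L := hT.limUnder_eq
    rw [this]; exact hT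
  apply le_antisymm
  · rw [← EReal.le_of_forall_lt_iff_le]
    intro z hz
    have hε : (0:ℝ) < z - g.root := by
      have := EReal.coe_lt_coe_iff.mp hz; linarith
    have hB := g.rootCont (z - g.root) hε
    refine iSup_le fun Z => ?_
    obtain ⟨x, hx⟩ := ((hB.union Z.finite_toSet).infinite_compl).nonempty
    simp only [Set.mem_compl_iff, Set.mem_union, not_or, Finset.mem_coe] at hx
    refine le_trans (iInf_le _ x) ?_
    refine le_trans (iInf_le _ hx.2) ?_
    rw [EReal.coe_le_coe_iff]
    have hclose : ∀ t : ℝ, 0 ≤ t → g.val x t - g.slope x * t - g.root < z - g.root := by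
      intro t ht
      by_contra hcon
      push_neg at hcon
      exact hx.1 ⟨t, ht, le_trans hcon (le_abs_self _)⟩
    refine le_of_tendsto (hL x) ?_
    filter_upwards [Filter.eventually_ge_atTop (0:ℝ)] with t ht
    have := hclose t ht; linarith
  · rw [← EReal.ge_of_forall_gt_iff_ge]
    intro z hz
    have hε : (0:ℝ) < g.root - z := by
      have := EReal.coe_lt_coe_iff.mp hz; linarith
    have hB := g.rootCont (g.root - z) hε
    refine le_trans ?_ (le_iSup _ hB.toFinset)
    refine le_iInf fun x => le_iInf fun hx => ?_
    rw [Set.Finite.mem_toFinset] at hx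
    rw [EReal.coe_le_coe_iff]
    have hclose : ∀ t : ℝ, 0 ≤ t → -(g.val x t - g.slope x * t - g.root) < g.root - z := by
      intro t ht
      by_contra hcon
      push_neg at hcon
      exact hx ⟨t, ht, le_trans hcon (neg_le_abs _)⟩
    refine ge_of_tendsto (hL x) ?_
    filter_upwards [Filter.eventually_ge_atTop (0:ℝ)] with t ht
    have := hclose t ht; linarith
end

section
/- Let n, r be positive integers, ℓ₁,…,ℓ_n rational linear forms on ℝ^r, and q₁,…,q_n ≥ 0 real numbers. Let a = (a₁,…,a_r) ∈ ℝ_{>0}^r be linearly independent over ℚ with ℓ_j(a) + q_j ≥ 0 for all j. Then for any ε > 0 there exists a sequence δ^{(m)} ∈ ℝ_{>0}^r converging to 0 such that for all m and j: ℓ_j(δ^{(m)}) + ε q_j ≥ 0, and δ_i^{(m)} + a_i ∈ ℚ for all i. -/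
/-!
For `0 < t < ε` the point `t • a` satisfies every constraint with a nonzero form strictly: if
`q_j > 0` this is `t (ℓ_j(a) + q_j) + (ε - t) q_j > 0`, and if `q_j = 0` then `ℓ_j(a) ≥ 0`, while
`ℓ_j(a) ≠ 0` by `ℚ`-linear independence of `a`. Constraints with zero form hold trivially. Hence `0`
lies in the closure of an open set of admissible `δ`, and since the shifts `-a + ℚ^r` are dense,
`0` is a limit of admissible shifts.
-/

open Filter Topology Set

lemma dense_setOf_add_mem_range_ratCast {ι : Type*} (a : ι → ℝ) :
    Dense {δ : ι → ℝ | ∀ i, ∃ c : ℚ, δ i + a i = c} := by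
  have hcoord : ∀ i, Dense ((· + a i) ⁻¹' range ((↑) : ℚ → ℝ)) := fun i =>
    Rat.denseRange_cast.preimage (Homeomorph.addRight (a i)).isOpenMap
  simpa [Set.pi, eq_comm] using dense_pi univ fun i _ => hcoord i

lemma LinearIndependent.eq_zero_of_sum_ratCast_mul_eq_zero {ι : Type*} [Fintype ι]
    {a : ι → ℝ} (hind : LinearIndependent ℚ a) {g : ι → ℚ}
    (hg : ∑ i, (g i : ℝ) * a i = 0) : g = 0 :=
  funext <| Fintype.linearIndependent_iff.mp hind g <| by
    simpa only [← Rat.cast_smul_eq_qsmul ℝ, smul_eq_mul] using hg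

lemma LinearIndependent.sum_ratCast_mul_mul_add_pos {ι : Type*} [Fintype ι] {a : ι → ℝ}
    (hind : LinearIndependent ℚ a) {g : ι → ℚ} (hg : g ≠ 0) {q ε t : ℝ} (hq : 0 ≤ q)
    (hconstraint : 0 ≤ ∑ i, (g i : ℝ) * a i + q) (ht : 0 < t) (htε : t < ε) :
    0 < ∑ i, (g i : ℝ) * (t * a i) + ε * q := by
  have hscale : ∑ i, (g i : ℝ) * (t * a i) = t * ∑ i, (g i : ℝ) * a i := by
    rw [Finset.mul_sum]
    exact Finset.sum_congr rfl fun i _ => by ring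
  rw [hscale]
  rcases hq.lt_or_eq with hq | rfl
  · nlinarith
  · have hne : ∑ i, (g i : ℝ) * a i ≠ 0 := fun h => hg (hind.eq_zero_of_sum_ratCast_mul_eq_zero h)
    have hpos : 0 < ∑ i, (g i : ℝ) * a i := lt_of_le_of_ne (by simpa using hconstraint) hne.symm
    simpa using mul_pos ht hpos

theorem rational_approximation_of_linear_constraints_general
    (n r : ℕ)
    (b : Fin n → Fin r → ℚ) (q : Fin n → ℝ) (hq : ∀ j, 0 ≤ q j)
    (a : Fin r → ℝ) (ha : ∀ i, 0 < a i)
    (hind : LinearIndependent ℚ a)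
    (hconstraint : ∀ j, 0 ≤ (∑ i, (b j i : ℝ) * a i) + q j)
    (ε : ℝ) (hε : 0 < ε) :
    ∃ δ : ℕ → Fin r → ℝ,
      (∀ m i, 0 < δ m i) ∧
      Filter.Tendsto δ Filter.atTop (nhds 0) ∧
      (∀ m j, 0 ≤ (∑ i, (b j i : ℝ) * δ m i) + ε * q j) ∧
      (∀ m i, ∃ c : ℚ, δ m i + a i = (c : ℝ)) := by
  set V : Set (Fin r → ℝ) :=
    {δ | (∀ i, 0 < δ i) ∧ ∀ j, b j = 0 ∨ 0 < ∑ i, (b j i : ℝ) * δ i + ε * q j}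
  have hV : IsOpen V := by
    simp only [V, ofPred_and, ofPred_forall, ofPred_or]
    exact (isOpen_iInter_of_finite fun i => isOpen_lt continuous_const (continuous_apply i)).inter
      (isOpen_iInter_of_finite fun j => isOpen_const.union (isOpen_lt continuous_const (by fun_prop)))
  have hray : ∀ᶠ t in 𝓝[>] (0 : ℝ), t • a ∈ V := by
    filter_upwards [Ioo_mem_nhdsGT hε] with t ⟨ht, htε⟩
    refine ⟨fun i => mul_pos ht (ha i), fun j => ?_⟩
    by_cases hbj : b j = 0
    · exact .inl hbj
    · exact .inr (hind.sum_ratCast_mul_mul_add_pos hbj (hq j) (hconstraint j) ht htε)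
  have hlim : Tendsto (· • a) (𝓝[>] (0 : ℝ)) (𝓝 0) :=
    ((by fun_prop : Continuous fun t : ℝ => t • a).tendsto' 0 0 (zero_smul ℝ a)).mono_left
      nhdsWithin_le_nhds
  obtain ⟨δ, hδ, hδlim⟩ := mem_closure_iff_seq_limit.mp <|
    closure_minimal ((dense_setOf_add_mem_range_ratCast a).open_subset_closure_inter hV)
      isClosed_closure (mem_closure_of_tendsto hlim hray)
  refine ⟨δ, fun m => (hδ m).1.1, hδlim, fun m j => ?_, fun m => (hδ m).2⟩
  rcases (hδ m).1.2 j with hbj | hpos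
  · simpa [hbj] using mul_nonneg hε.le (hq j)
  · exact hpos.le

/-- Let `ℓ₁,…,ℓ_n` be rational linear forms on `ℝ^r` (given by rational
coefficients `b j i`) and `q₁,…,q_n ≥ 0` real numbers. Let `a ∈ ℝ_{>0}^r` be linearly
independent over `ℚ` and satisfy `ℓ_j(a) + q_j ≥ 0` for all `j`. Then for any `ε > 0` there
is a sequence `δ^{(m)} ∈ ℝ_{>0}^r` converging to `0` such that `ℓ_j(δ^{(m)}) + ε q_j ≥ 0`
for all `m, j`, and `δ^{(m)}_i + a_i ∈ ℚ` for all `m, i`. -/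
theorem rational_approximation_of_linear_constraints
    (n r : ℕ) (hn : 0 < n) (hr : 0 < r)
    (b : Fin n → Fin r → ℚ) (q : Fin n → ℝ) (hq : ∀ j, 0 ≤ q j)
    (a : Fin r → ℝ) (ha : ∀ i, 0 < a i)
    (hind : LinearIndependent ℚ a)
    (hconstraint : ∀ j, 0 ≤ (∑ i, (b j i : ℝ) * a i) + q j)
    (ε : ℝ) (hε : 0 < ε) :
    ∃ δ : ℕ → Fin r → ℝ,
      (∀ m i, 0 < δ m i) ∧
      Filter.Tendsto δ Filter.atTop (nhds 0) ∧
      (∀ m j, 0 ≤ (∑ i, (b j i : ℝ) * δ m i) + ε * q j) ∧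
      (∀ m i, ∃ c : ℚ, δ m i + a i = (c : ℝ)) :=
  rational_approximation_of_linear_constraints_general n r b q hq a ha hind hconstraint ε hε
end
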